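/- arXiv:1102.4587 — 7 statements merged into one kernel-verified Lean document; each statement's English description precedes it below -/
import Mathlib

section
/- For H ∈ (0,1/2), the covariance function C^H of fractional Brownian motion on [0,T]^2 satisfies V_{1/(2H)}(C^H;[0,T]^2) < ∞ but |C^H|_{1/(2H)-var;[0,T]^2} = +∞; in particular, finite grid p-variation does not imply finite controlled p-variation. -/
open Set
open scoped ENNReal NNReal

/-- A closed rectangle `[a,b] × [c,d] ⊆ ℝ²`, encoded by its four corner coordinates. -/
structure Rect where
  a : ℝ
  b : ℝ
  c : ℝ
  d : ℝ

noncomputable instance : DecidableEq Rect := fun _ _ => Classical.dec _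

/-- The closed rectangle as a subset of the plane. -/
def Rect.toSet (R : Rect) : Set (ℝ × ℝ) := Set.Icc R.a R.b ×ˢ Set.Icc R.c R.d

/-- The open interior of the rectangle. -/
def Rect.openSet (R : Rect) : Set (ℝ × ℝ) := Set.Ioo R.a R.b ×ˢ Set.Ioo R.c R.d

/-- The rectangle is well formed: `a ≤ b`, `c ≤ d`. -/
def Rect.Valid (R : Rect) : Prop := R.a ≤ R.b ∧ R.c ≤ R.d

/-- Rectangular increment of `f` over `[a,b] × [c,d]`. -/
def Rect.inc (f : ℝ × ℝ → ℝ) (R : Rect) : ℝ :=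
  f (R.b, R.d) - f (R.a, R.d) - f (R.b, R.c) + f (R.a, R.c)

/-- `P` is a partition of `R` into essentially disjoint rectangles. -/
def IsPartition (R : Rect) (P : Finset Rect) : Prop :=
  (∀ Q ∈ P, Q.Valid) ∧
  ((P : Set Rect).Pairwise fun Q Q' => Disjoint Q.openSet Q'.openSet) ∧
  (⋃ Q ∈ P, Q.toSet) = R.toSet

/-- The controlled `p`-variation of `f` over `R`, raised to the power `p`:
`sup` over all partitions of `R` into essentially disjoint rectangles of
`Σ |f(A)|^p`.  So `|f|_{p-var;R} = (cVarSum p f R) ^ (1/p)`. -/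
noncomputable def cVarSum (p : ℝ) (f : ℝ × ℝ → ℝ) (R : Rect) : ℝ≥0∞ :=
  ⨆ (P : Finset Rect) (_ : IsPartition R P),
    ∑ Q ∈ P, ENNReal.ofReal |Rect.inc f Q| ^ p

/-- The grid `p`-variation of `f` over `R`, raised to the power `p`:
`sup` over grid-like partitions (products of dissections of the two sides)
of `Σ_{i,j} |f([t_i,t_{i+1}] × [s_j,s_{j+1}])|^p`.
So `V_p(f;R) = (gridVarSum p f R) ^ (1/p)`. -/
noncomputable def gridVarSum (p : ℝ) (f : ℝ × ℝ → ℝ) (R : Rect) : ℝ≥0∞ :=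
  ⨆ (n : ℕ) (m : ℕ) (t : Fin (n+1) → ℝ) (s : Fin (m+1) → ℝ)
    (_ : Monotone t) (_ : Monotone s)
    (_ : t 0 = R.a) (_ : t (Fin.last n) = R.b)
    (_ : s 0 = R.c) (_ : s (Fin.last m) = R.d),
    ∑ i : Fin n, ∑ j : Fin m,
      ENNReal.ofReal |Rect.inc f ⟨t i.castSucc, t i.succ, s j.castSucc, s j.succ⟩| ^ p

/-- The covariance of fractional Brownian motion with Hurst parameter `H`:
`C^H(s,t) = (1/2)(t^{2H} + s^{2H} - |t-s|^{2H})`. -/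
noncomputable def fbmCov (H : ℝ) : ℝ × ℝ → ℝ :=
  fun x => (x.2 ^ (2 * H) + x.1 ^ (2 * H) - |x.2 - x.1| ^ (2 * H)) / 2


section aux

lemma concave_key {θ : ℝ} (hθ0 : 0 < θ) (hθ1 : θ < 1) {a b c : ℝ}
    (ha : 0 ≤ a) (hab : a ≤ b) (hc : 0 ≤ c) :
    (b + c) ^ θ + a ^ θ ≤ (a + c) ^ θ + b ^ θ := by
  rcases eq_or_lt_of_le hab with rfl | hab'
  · simp [add_comm]
  rcases eq_or_lt_of_le hc with rfl | hc'
  · simp only [add_zero]; linarith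
  have hD : (0:ℝ) < b + c - a := by linarith
  set lam : ℝ := c / (b + c - a) with hlam
  have h1 : 0 ≤ lam := div_nonneg hc hD.le
  have h2 : lam ≤ 1 := by rw [hlam, div_le_one hD]; linarith
  have hcc := (Real.strictConcaveOn_rpow hθ0 hθ1).concaveOn
  have hxmem : a ∈ Set.Ici (0:ℝ) := ha
  have hymem : (b + c) ∈ Set.Ici (0:ℝ) := by simp; linarith
  have hA : lam * a ^ θ + (1 - lam) * (b + c) ^ θ ≤ (lam * a + (1 - lam) * (b + c)) ^ θ := by
    simpa [smul_eq_mul] using hcc.2 hxmem hymem h1 (by linarith) (by ring)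
  have hB : (1 - lam) * a ^ θ + lam * (b + c) ^ θ ≤ ((1 - lam) * a + lam * (b + c)) ^ θ := by
    simpa [smul_eq_mul] using hcc.2 hxmem hymem (by linarith : (0:ℝ) ≤ 1 - lam) h1 (by ring)
  have eA : lam * a + (1 - lam) * (b + c) = b := by
    rw [hlam]; field_simp; ring
  have eB : (1 - lam) * a + lam * (b + c) = a + c := by
    rw [hlam]; field_simp; ring
  rw [eA] at hA
  rw [eB] at hB
  nlinarith [hA, hB]

lemma rpow_two_add_le {p x y : ℝ} (hp : 1 ≤ p) (hx : 0 ≤ x) (hy : 0 ≤ y) :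
    x ^ p + y ^ p ≤ (x + y) ^ p := by
  have h := NNReal.add_rpow_le_rpow_add x.toNNReal y.toNNReal hp
  have h' := NNReal.coe_le_coe.2 h
  push_cast at h'
  rwa [Real.coe_toNNReal _ hx, Real.coe_toNNReal _ hy] at h'

lemma sum_rpow_le_rpow_sum {p : ℝ} (hp : 1 ≤ p) {ι : Type*} (s : Finset ι) (f : ι → ℝ)
    (hf : ∀ i, 0 ≤ f i) : ∑ i ∈ s, f i ^ p ≤ (∑ i ∈ s, f i) ^ p := by
  classical
  induction s using Finset.induction with
  | empty => simp [Real.zero_rpow (by positivity : p ≠ 0)]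
  | @insert a s ha ih =>
    rw [Finset.sum_insert ha, Finset.sum_insert ha]
    calc f a ^ p + ∑ i ∈ s, f i ^ p ≤ f a ^ p + (∑ i ∈ s, f i) ^ p := by linarith
      _ ≤ (f a + ∑ i ∈ s, f i) ^ p :=
        rpow_two_add_le hp (hf a) (Finset.sum_nonneg fun i _ => hf i)

lemma fin_telescope {n : ℕ} (t : Fin (n+1) → ℝ) :
    ∑ i : Fin n, (t i.succ - t i.castSucc) = t (Fin.last n) - t 0 := by
  set f : ℕ → ℝ := fun j => t ⟨min j n, by omega⟩ with hf
  have key : ∀ i : Fin n, t i.succ - t i.castSucc = f (↑i + 1) - f ↑i := by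
    intro i
    have h1 : f (↑i + 1) = t i.succ := by
      simp only [hf]; congr 1; exact Fin.ext (by simp [Nat.min_eq_left (Nat.succ_le_of_lt i.isLt)])
    have h2 : f ↑i = t i.castSucc := by
      simp only [hf]; congr 1; exact Fin.ext (by simp [Nat.min_eq_left (le_of_lt i.isLt)])
    rw [h1, h2]
  rw [Finset.sum_congr rfl (fun i _ => key i)]
  rw [Fin.sum_univ_eq_sum_range (fun j => f (j+1) - f j) n]
  rw [Finset.sum_range_sub f n]
  congr 1
  · simp only [hf]; congr 1; exact Fin.ext (by simp)

noncomputable def phiF (θ u v x : ℝ) : ℝ := (|x - u| ^ θ - |x - v| ^ θ) / 2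

noncomputable def PhiF (θ u v x : ℝ) : ℝ :=
  if x ≤ u then -phiF θ u v x
  else if x ≤ v then phiF θ u v x - 2 * phiF θ u v u
  else 2 * phiF θ u v v - 2 * phiF θ u v u - phiF θ u v x

section phi
variable {θ u v : ℝ} (hθ0 : 0 < θ) (hθ1 : θ < 1) (huv : u ≤ v)
include hθ0 hθ1 huv

lemma phi_m1 {s t : ℝ} (hst : s ≤ t) (htu : t ≤ u) : phiF θ u v t ≤ phiF θ u v s := by
  have e1 : |t - u| = u - t := by rw [abs_sub_comm, abs_of_nonneg (by linarith)]
  have e2 : |t - v| = v - t := by rw [abs_sub_comm, abs_of_nonneg (by linarith)]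
  have e3 : |s - u| = u - s := by rw [abs_sub_comm, abs_of_nonneg (by linarith)]
  have e4 : |s - v| = v - s := by rw [abs_sub_comm, abs_of_nonneg (by linarith)]
  have K := concave_key hθ0 hθ1 (a := u - t) (b := v - t) (c := t - s)
    (by linarith) (by linarith) (by linarith)
  have eA : v - t + (t - s) = v - s := by ring
  have eB : u - t + (t - s) = u - s := by ring
  rw [eA, eB] at K
  simp only [phiF, e1, e2, e3, e4]
  linarith

lemma phi_m2 {s t : ℝ} (hus : u ≤ s) (hst : s ≤ t) (htv : t ≤ v) :
    phiF θ u v s ≤ phiF θ u v t := by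
  have e1 : |t - u| = t - u := abs_of_nonneg (by linarith)
  have e2 : |t - v| = v - t := by rw [abs_sub_comm, abs_of_nonneg (by linarith)]
  have e3 : |s - u| = s - u := abs_of_nonneg (by linarith)
  have e4 : |s - v| = v - s := by rw [abs_sub_comm, abs_of_nonneg (by linarith)]
  have h1 : (s - u) ^ θ ≤ (t - u) ^ θ := Real.rpow_le_rpow (by linarith) (by linarith) hθ0.le
  have h2 : (v - t) ^ θ ≤ (v - s) ^ θ := Real.rpow_le_rpow (by linarith) (by linarith) hθ0.le
  simp only [phiF, e1, e2, e3, e4]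
  linarith

lemma phi_m3 {s t : ℝ} (hvs : v ≤ s) (hst : s ≤ t) : phiF θ u v t ≤ phiF θ u v s := by
  have e1 : |t - u| = t - u := abs_of_nonneg (by linarith)
  have e2 : |t - v| = t - v := abs_of_nonneg (by linarith)
  have e3 : |s - u| = s - u := abs_of_nonneg (by linarith)
  have e4 : |s - v| = s - v := abs_of_nonneg (by linarith)
  have K := concave_key hθ0 hθ1 (a := s - v) (b := t - v) (c := v - u)
    (by linarith) (by linarith) (by linarith)
  have eA : t - v + (v - u) = t - u := by ring
  have eB : s - v + (v - u) = s - u := by ring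
  rw [eA, eB] at K
  simp only [phiF, e1, e2, e3, e4]
  linarith

lemma phi_var {s t : ℝ} (hst : s ≤ t) :
    |phiF θ u v t - phiF θ u v s| ≤ PhiF θ u v t - PhiF θ u v s := by
  unfold PhiF
  rcases le_or_gt t u with htu | htu
  · have hsu : s ≤ u := hst.trans htu
    have h := phi_m1 hθ0 hθ1 huv hst htu
    rw [if_pos htu, if_pos hsu, abs_le]
    constructor <;> linarith
  · rcases le_or_gt t v with htv | htv
    · rw [if_neg (not_le.2 htu), if_pos htv]
      rcases le_or_gt s u with hsu | hsu
      · rw [if_pos hsu]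
        have h1 : phiF θ u v u ≤ phiF θ u v s := phi_m1 hθ0 hθ1 huv hsu le_rfl
        have h2 : phiF θ u v u ≤ phiF θ u v t := phi_m2 hθ0 hθ1 huv le_rfl htu.le htv
        rw [abs_le]; constructor <;> linarith
      · rw [if_neg (not_le.2 hsu), if_pos (hst.trans htv)]
        have h := phi_m2 hθ0 hθ1 huv hsu.le hst htv
        rw [abs_le]; constructor <;> linarith
    · have htu' : u < t := lt_of_le_of_lt huv htv
      rw [if_neg (not_le.2 htu'), if_neg (not_le.2 htv)]
      rcases le_or_gt s u with hsu | hsu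
      · rw [if_pos hsu]
        have h1 : phiF θ u v u ≤ phiF θ u v s := phi_m1 hθ0 hθ1 huv hsu le_rfl
        have h2 : phiF θ u v u ≤ phiF θ u v v := phi_m2 hθ0 hθ1 huv le_rfl huv le_rfl
        have h3 : phiF θ u v t ≤ phiF θ u v v := phi_m3 hθ0 hθ1 huv le_rfl htv.le
        rw [abs_le]; constructor <;> linarith
      · rcases le_or_gt s v with hsv | hsv
        · rw [if_neg (not_le.2 hsu), if_pos hsv]
          have h1 : phiF θ u v s ≤ phiF θ u v v := phi_m2 hθ0 hθ1 huv hsu.le hsv le_rfl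
          have h2 : phiF θ u v t ≤ phiF θ u v v := phi_m3 hθ0 hθ1 huv le_rfl htv.le
          rw [abs_le]; constructor <;> linarith
        · rw [if_neg (not_le.2 hsu), if_neg (not_le.2 hsv)]
          have h := phi_m3 hθ0 hθ1 huv hsv.le hst
          rw [abs_le]; constructor <;> linarith

end phi

lemma Phi_diff_le {θ u v T : ℝ} (hθ0 : 0 < θ) (hθ1 : θ < 1) (hu : 0 ≤ u) (huv : u ≤ v)
    (hvT : v ≤ T) : PhiF θ u v T - PhiF θ u v 0 ≤ 2 * (v - u) ^ θ := by
  have hδ : (0:ℝ) ≤ (v - u) ^ θ := Real.rpow_nonneg (by linarith) _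
  have hzθ : (0:ℝ) ^ θ = 0 := Real.zero_rpow hθ0.ne'
  have hφu : phiF θ u v u = -((v - u) ^ θ) / 2 := by
    simp only [phiF, sub_self, abs_zero, hzθ]
    rw [abs_sub_comm, abs_of_nonneg (by linarith)]
    ring
  have hφv : phiF θ u v v = (v - u) ^ θ / 2 := by
    simp only [phiF, sub_self, abs_zero, hzθ]
    rw [abs_of_nonneg (by linarith)]
    ring
  have hφ0 : phiF θ u v 0 ≤ 0 := by
    have e1 : |0 - u| = u := by rw [abs_sub_comm, sub_zero, abs_of_nonneg hu]
    have e2 : |0 - v| = v := by rw [abs_sub_comm, sub_zero, abs_of_nonneg (by linarith : (0:ℝ) ≤ v)]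
    have : u ^ θ ≤ v ^ θ := Real.rpow_le_rpow hu huv hθ0.le
    simp only [phiF, e1, e2]
    linarith
  have hφT : 0 ≤ phiF θ u v T := by
    have e1 : |T - u| = T - u := abs_of_nonneg (by linarith)
    have e2 : |T - v| = T - v := abs_of_nonneg (by linarith)
    have : (T - v) ^ θ ≤ (T - u) ^ θ := Real.rpow_le_rpow (by linarith) (by linarith) hθ0.le
    simp only [phiF, e1, e2]
    linarith
  have hΦ0 : PhiF θ u v 0 = -phiF θ u v 0 := if_pos hu
  unfold PhiF
  rw [if_pos hu]
  split_ifs with h1 h2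
  · linarith
  · have hTv : T = v := le_antisymm h2 hvT
    rw [hTv, hφv, hφu]
    linarith
  · rw [hφv, hφu]
    linarith

lemma row_bound {θ u v T : ℝ} (hθ0 : 0 < θ) (hθ1 : θ < 1) (hu : 0 ≤ u) (huv : u ≤ v)
    (hvT : v ≤ T) {m : ℕ} (s : Fin (m+1) → ℝ) (hs : Monotone s) (hs0 : s 0 = 0)
    (hsl : s (Fin.last m) = T) :
    ∑ j : Fin m, |phiF θ u v (s j.succ) - phiF θ u v (s j.castSucc)| ≤ 2 * (v - u) ^ θ := by
  have step : ∀ j : Fin m, |phiF θ u v (s j.succ) - phiF θ u v (s j.castSucc)| ≤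
      PhiF θ u v (s j.succ) - PhiF θ u v (s j.castSucc) := fun j =>
    phi_var hθ0 hθ1 huv (hs (Fin.castSucc_le_succ j))
  calc ∑ j : Fin m, |phiF θ u v (s j.succ) - phiF θ u v (s j.castSucc)|
      ≤ ∑ j : Fin m, (PhiF θ u v (s j.succ) - PhiF θ u v (s j.castSucc)) :=
        Finset.sum_le_sum fun j _ => step j
    _ = PhiF θ u v (s (Fin.last m)) - PhiF θ u v (s 0) := fin_telescope (fun j => PhiF θ u v (s j))
    _ ≤ 2 * (v - u) ^ θ := by rw [hs0, hsl]; exact Phi_diff_le hθ0 hθ1 hu huv hvT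

lemma fbmCov_inc (H : ℝ) (Q : Rect) :
    Rect.inc (fbmCov H) Q =
      ((|Q.d - Q.a| ^ (2*H) + |Q.c - Q.b| ^ (2*H)) -
        (|Q.d - Q.b| ^ (2*H) + |Q.c - Q.a| ^ (2*H))) / 2 := by
  simp only [Rect.inc, fbmCov]
  ring

lemma inc_eq_phi (H u v c d : ℝ) :
    Rect.inc (fbmCov H) ⟨u, v, c, d⟩ = phiF (2*H) u v d - phiF (2*H) u v c := by
  rw [fbmCov_inc]
  simp only [phiF]
  ring

lemma grid_le (H T : ℝ) (hH0 : 0 < H) (hH : H < 1 / 2) (hT : 0 < T) :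
    gridVarSum (1 / (2 * H)) (fbmCov H) (Rect.mk 0 T 0 T) ≤
      ENNReal.ofReal ((2:ℝ) ^ (1/(2*H)) * T) := by
  set θ : ℝ := 2 * H with hθ
  set p : ℝ := 1 / (2 * H) with hp
  have hθ0 : 0 < θ := by positivity
  have hθ1 : θ < 1 := by rw [hθ]; linarith
  have hp1 : 1 ≤ p := by
    rw [hp]; rw [le_div_iff₀ (by positivity)]; linarith
  have hp0 : (0:ℝ) ≤ p := by linarith
  have hθp : θ * p = 1 := by rw [hθ, hp]; field_simp
  refine iSup_le fun n => iSup_le fun m => iSup_le fun t => iSup_le fun s => iSup_le fun ht =>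
    iSup_le fun hs => iSup_le fun ht0 => iSup_le fun htl => iSup_le fun hs0 => iSup_le fun hsl => ?_
  -- rewrite each term as ofReal of a real
  have hterm : ∀ (i : Fin n) (j : Fin m),
      ENNReal.ofReal |Rect.inc (fbmCov H) ⟨t i.castSucc, t i.succ, s j.castSucc, s j.succ⟩| ^ p
        = ENNReal.ofReal (|phiF θ (t i.castSucc) (t i.succ) (s j.succ)
            - phiF θ (t i.castSucc) (t i.succ) (s j.castSucc)| ^ p) := by
    intro i j
    rw [ENNReal.ofReal_rpow_of_nonneg (abs_nonneg _) hp0, inc_eq_phi]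
  calc (∑ i : Fin n, ∑ j : Fin m,
      ENNReal.ofReal |Rect.inc (fbmCov H) ⟨t i.castSucc, t i.succ, s j.castSucc, s j.succ⟩| ^ p)
      = ∑ i : Fin n, ENNReal.ofReal (∑ j : Fin m,
          |phiF θ (t i.castSucc) (t i.succ) (s j.succ)
            - phiF θ (t i.castSucc) (t i.succ) (s j.castSucc)| ^ p) := by
        refine Finset.sum_congr rfl fun i _ => ?_
        rw [Finset.sum_congr rfl fun j _ => hterm i j]
        rw [ENNReal.ofReal_sum_of_nonneg fun j _ => Real.rpow_nonneg (abs_nonneg _) p]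
    _ ≤ ENNReal.ofReal (∑ i : Fin n, ((2:ℝ) ^ p * (t i.succ - t i.castSucc))) := by
        rw [ENNReal.ofReal_sum_of_nonneg]
        · refine Finset.sum_le_sum fun i _ => ENNReal.ofReal_le_ofReal ?_
          have ht0' : t 0 = 0 := ht0
          have htl' : t (Fin.last n) = T := htl
          have hu : 0 ≤ t i.castSucc := by
            rw [← ht0']; exact ht (Fin.zero_le _)
          have huv : t i.castSucc ≤ t i.succ := ht (Fin.castSucc_le_succ i)
          have hvT : t i.succ ≤ T := by
            rw [← htl']; exact ht (Fin.le_last _)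
          have h1 := sum_rpow_le_rpow_sum hp1 Finset.univ
            (fun j : Fin m => |phiF θ (t i.castSucc) (t i.succ) (s j.succ)
              - phiF θ (t i.castSucc) (t i.succ) (s j.castSucc)|) (fun j => abs_nonneg _)
          have h2 := row_bound hθ0 hθ1 hu huv hvT s hs hs0 hsl
          have h3 : (∑ j : Fin m, |phiF θ (t i.castSucc) (t i.succ) (s j.succ)
              - phiF θ (t i.castSucc) (t i.succ) (s j.castSucc)|) ^ p
              ≤ (2 * (t i.succ - t i.castSucc) ^ θ) ^ p :=
            Real.rpow_le_rpow (Finset.sum_nonneg fun j _ => abs_nonneg _) h2 hp0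
          have h4 : (2 * (t i.succ - t i.castSucc) ^ θ) ^ p
              = (2:ℝ) ^ p * (t i.succ - t i.castSucc) := by
            rw [Real.mul_rpow (by norm_num) (Real.rpow_nonneg (by linarith) _),
              ← Real.rpow_mul (by linarith : (0:ℝ) ≤ t i.succ - t i.castSucc), hθp,
              Real.rpow_one]
          calc _ ≤ _ := h1.trans h3
            _ = _ := h4
        · intro i _
          have h5 : t i.castSucc ≤ t i.succ := ht (Fin.castSucc_le_succ i)
          have h6 : (0:ℝ) ≤ (2:ℝ) ^ p := Real.rpow_nonneg (by norm_num) _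
          nlinarith
    _ ≤ ENNReal.ofReal ((2:ℝ) ^ p * T) := by
        refine ENNReal.ofReal_le_ofReal ?_
        have ht0' : t 0 = 0 := ht0
        have htl' : t (Fin.last n) = T := htl
        rw [← Finset.mul_sum, fin_telescope t, ht0', htl', sub_zero]

def Rect.aff (k h : ℝ) (Q : Rect) : Rect := ⟨k*Q.a+h, k*Q.b+h, k*Q.c+h, k*Q.d+h⟩

lemma aff_injective {k h : ℝ} (hk : k ≠ 0) : Function.Injective (Rect.aff k h) := by
  rintro ⟨a,b,c,d⟩ ⟨a',b',c',d'⟩ e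
  simp only [Rect.aff, Rect.mk.injEq] at e ⊢
  obtain ⟨e1, e2, e3, e4⟩ := e
  exact ⟨mul_left_cancel₀ hk (by linarith), mul_left_cancel₀ hk (by linarith),
    mul_left_cancel₀ hk (by linarith), mul_left_cancel₀ hk (by linarith)⟩

lemma affMap_injective {k h : ℝ} (hk : k ≠ 0) :
    Function.Injective (fun x : ℝ × ℝ => (k*x.1+h, k*x.2+h)) := by
  rintro ⟨x1,x2⟩ ⟨y1,y2⟩ e
  simp only [Prod.mk.injEq] at e ⊢
  exact ⟨mul_left_cancel₀ hk (by linarith [e.1]), mul_left_cancel₀ hk (by linarith [e.2])⟩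

lemma aff_toSet {k h : ℝ} (hk : 0 < k) (Q : Rect) :
    (Q.aff k h).toSet = (fun x : ℝ × ℝ => (k*x.1+h, k*x.2+h)) '' Q.toSet := by
  unfold Rect.toSet Rect.aff
  rw [← Set.prod_image_image_eq (m₁ := fun x => k*x+h) (m₂ := fun x => k*x+h),
    Set.image_affine_Icc' hk, Set.image_affine_Icc' hk]

lemma aff_openSet {k h : ℝ} (hk : 0 < k) (Q : Rect) :
    (Q.aff k h).openSet = (fun x : ℝ × ℝ => (k*x.1+h, k*x.2+h)) '' Q.openSet := by
  unfold Rect.openSet Rect.aff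
  rw [← Set.prod_image_image_eq (m₁ := fun x => k*x+h) (m₂ := fun x => k*x+h),
    Set.image_affine_Ioo hk, Set.image_affine_Ioo hk]

lemma aff_partition {k h : ℝ} (hk : 0 < k) {R : Rect} {P : Finset Rect}
    (hP : IsPartition R P) : IsPartition (R.aff k h) (P.image (Rect.aff k h)) := by
  obtain ⟨hv, hd, hu⟩ := hP
  refine ⟨?_, ?_, ?_⟩
  · intro Q hQ
    rw [Finset.mem_image] at hQ
    obtain ⟨Q₀, h₀, rfl⟩ := hQ
    obtain ⟨h1, h2⟩ := hv Q₀ h₀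
    exact ⟨by simp only [Rect.aff]; nlinarith, by simp only [Rect.aff]; nlinarith⟩
  · rw [Finset.coe_image]
    intro x hx y hy hxy
    obtain ⟨Qx, hQx, rfl⟩ := hx
    obtain ⟨Qy, hQy, rfl⟩ := hy
    have hne : Qx ≠ Qy := fun e => hxy (by rw [e])
    have hdis := hd hQx hQy hne
    rw [aff_openSet hk, aff_openSet hk]
    exact Set.disjoint_image_of_injective (affMap_injective hk.ne') hdis
  · have : ⋃ Q ∈ P.image (Rect.aff k h), Q.toSet = ⋃ Q ∈ P, (Rect.aff k h Q).toSet := by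
      exact Finset.set_biUnion_finset_image
    rw [this]
    have : ⋃ Q ∈ P, (Rect.aff k h Q).toSet
        = (fun x : ℝ × ℝ => (k*x.1+h, k*x.2+h)) '' ⋃ Q ∈ P, Q.toSet := by
      rw [Set.image_iUnion₂]
      exact Set.iUnion₂_congr fun Q _ => aff_toSet hk Q
    rw [this, hu, ← aff_toSet hk]

lemma Rect.openSet_subset (Q : Rect) : Q.openSet ⊆ Q.toSet :=
  Set.prod_mono Set.Ioo_subset_Icc_self Set.Ioo_subset_Icc_self

lemma sep_horiz {m : ℝ} {Q₁ Q₂ : Rect} (h₁ : ∀ x ∈ Q₁.toSet, x.1 ≤ m)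
    (hv : Q₂.Valid) (h₂ : ∀ x ∈ Q₂.toSet, m ≤ x.1) :
    Disjoint Q₁.openSet Q₂.openSet := by
  rw [Set.disjoint_left]
  intro x hx₁ hx₂
  have h1 : x.1 ≤ m := h₁ x (Q₁.openSet_subset hx₁)
  have ha : (Q₂.a, Q₂.c) ∈ Q₂.toSet := ⟨⟨le_rfl, hv.1⟩, ⟨le_rfl, hv.2⟩⟩
  have h2 : m ≤ Q₂.a := h₂ _ ha
  have h3 : Q₂.a < x.1 := hx₂.1.1
  linarith

lemma sep_vert {m : ℝ} {Q₁ Q₂ : Rect} (h₁ : ∀ x ∈ Q₁.toSet, x.2 ≤ m)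
    (hv : Q₂.Valid) (h₂ : ∀ x ∈ Q₂.toSet, m ≤ x.2) :
    Disjoint Q₁.openSet Q₂.openSet := by
  rw [Set.disjoint_left]
  intro x hx₁ hx₂
  have h1 : x.2 ≤ m := h₁ x (Q₁.openSet_subset hx₁)
  have ha : (Q₂.a, Q₂.c) ∈ Q₂.toSet := ⟨⟨le_rfl, hv.1⟩, ⟨le_rfl, hv.2⟩⟩
  have h2 : m ≤ Q₂.c := h₂ _ ha
  have h3 : Q₂.c < x.2 := hx₂.2.1
  linarith

lemma mem_partition_subset {R : Rect} {P : Finset Rect} (hP : IsPartition R P)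
    {Q : Rect} (hQ : Q ∈ P) : Q.toSet ⊆ R.toSet := by
  rw [← hP.2.2]
  exact Set.subset_biUnion_of_mem hQ

lemma single_partition {R : Rect} (hR : R.Valid) : IsPartition R {R} := by
  refine ⟨?_, ?_, ?_⟩
  · intro Q hQ
    rw [Finset.mem_singleton] at hQ
    rw [hQ]; exact hR
  · simp only [Finset.coe_singleton]
    exact Set.pairwise_singleton _ _
  · exact Finset.set_biUnion_singleton _ _

noncomputable def gT (H : ℝ) (Q : Rect) : ℝ≥0∞ :=
  ENNReal.ofReal |Rect.inc (fbmCov H) Q| ^ (1/(2*H))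

lemma cVarSum_eq (H : ℝ) (R : Rect) :
    cVarSum (1/(2*H)) (fbmCov H) R = ⨆ P, ⨆ _ : IsPartition R P, ∑ Q ∈ P, gT H Q := rfl

lemma inc_aff (H k h : ℝ) (hk : 0 ≤ k) (Q : Rect) :
    Rect.inc (fbmCov H) (Q.aff k h) = k ^ (2*H) * Rect.inc (fbmCov H) Q := by
  rw [fbmCov_inc, fbmCov_inc]
  have e : ∀ x y : ℝ, |(k*x+h) - (k*y+h)| ^ (2*H) = k^(2*H) * |x - y| ^ (2*H) := by
    intro x y
    rw [show (k*x+h) - (k*y+h) = k * (x - y) by ring, abs_mul, abs_of_nonneg hk,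
      Real.mul_rpow hk (abs_nonneg _)]
  simp only [Rect.aff]
  rw [e, e, e, e]
  ring

lemma term_aff {H : ℝ} (hH0 : 0 < H) (k h : ℝ) (hk : 0 ≤ k) (Q : Rect) :
    gT H (Q.aff k h) = ENNReal.ofReal k * gT H Q := by
  have hp0 : (0:ℝ) ≤ 1/(2*H) := by positivity
  have hkθ : (0:ℝ) ≤ k ^ (2*H) := Real.rpow_nonneg hk _
  have h1 : ((k:ℝ) ^ (2*H)) ^ (1/(2*H)) = k := by
    rw [← Real.rpow_mul hk, show (2*H) * (1/(2*H)) = 1 by field_simp, Real.rpow_one]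
  unfold gT
  rw [inc_aff H k h hk Q, abs_mul, abs_of_nonneg hkθ, ENNReal.ofReal_mul hkθ,
    ENNReal.mul_rpow_of_nonneg _ _ hp0, ENNReal.ofReal_rpow_of_nonneg hkθ hp0, h1]

lemma cvar_step {H T : ℝ} (hH0 : 0 < H) (hT : 0 < T) {P : Finset Rect}
    (hP : IsPartition (Rect.mk 0 T 0 T) P) :
    ∃ P' : Finset Rect, IsPartition (Rect.mk 0 T 0 T) P' ∧
      ∑ Q ∈ P', gT H Q = ∑ Q ∈ P, gT H Q
        + (gT H (Rect.mk 0 (T/2) (T/2) T) + gT H (Rect.mk (T/2) T 0 (T/2))) := by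
  classical
  set Q₃ : Rect := ⟨0, T/2, T/2, T⟩ with hQ₃def
  set Q₄ : Rect := ⟨T/2, T, 0, T/2⟩ with hQ₄def
  set S₁ : Rect := ⟨0, T/2, 0, T/2⟩ with hS₁def
  set S₂ : Rect := ⟨T/2, T, T/2, T⟩ with hS₂def
  set P₁ : Finset Rect := P.image (Rect.aff (1/2) 0) with hP₁def
  set P₂ : Finset Rect := P₁.image (Rect.aff 1 (T/2)) with hP₂def
  have hP₁ : IsPartition S₁ P₁ := by
    have e : Rect.aff (1/2) 0 (Rect.mk 0 T 0 T) = S₁ := by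
      simp only [Rect.aff, hS₁def, Rect.mk.injEq]
      refine ⟨by ring, by ring, by ring, by ring⟩
    rw [← e]
    exact aff_partition (by norm_num) hP
  have hP₂ : IsPartition S₂ P₂ := by
    have e : Rect.aff 1 (T/2) S₁ = S₂ := by
      simp only [Rect.aff, hS₁def, hS₂def, Rect.mk.injEq]
      refine ⟨by ring, by ring, by ring, by ring⟩
    rw [← e]
    exact aff_partition (by norm_num) hP₁
  have hsub₁ : ∀ Q ∈ P₁, Q.toSet ⊆ S₁.toSet := fun Q hQ => mem_partition_subset hP₁ hQ
  have hsub₂ : ∀ Q ∈ P₂, Q.toSet ⊆ S₂.toSet := fun Q hQ => mem_partition_subset hP₂ hQ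
  have hQ₃v : Q₃.Valid := ⟨by simp only [hQ₃def]; linarith, by simp only [hQ₃def]; linarith⟩
  have hQ₄v : Q₄.Valid := ⟨by simp only [hQ₄def]; linarith, by simp only [hQ₄def]; linarith⟩
  have hmem3 : ((0:ℝ), T) ∈ Q₃.toSet :=
    ⟨⟨le_rfl, by simp only [hQ₃def]; linarith⟩, ⟨by simp only [hQ₃def]; linarith, le_rfl⟩⟩
  have hmem4 : ((T:ℝ), 0) ∈ Q₄.toSet :=
    ⟨⟨by simp only [hQ₄def]; linarith, le_rfl⟩, ⟨le_rfl, by simp only [hQ₄def]; linarith⟩⟩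
  have hQ₃P₁ : Q₃ ∉ P₁ := by
    intro hmem
    have := (hsub₁ Q₃ hmem hmem3).2.2
    simp only [hS₁def] at this
    linarith
  have hQ₃P₂ : Q₃ ∉ P₂ := by
    intro hmem
    have := (hsub₂ Q₃ hmem hmem3).1.1
    simp only [hS₂def] at this
    linarith
  have hQ₄P₁ : Q₄ ∉ P₁ := by
    intro hmem
    have := (hsub₁ Q₄ hmem hmem4).1.2
    simp only [hS₁def] at this
    linarith
  have hQ₄P₂ : Q₄ ∉ P₂ := by
    intro hmem
    have := (hsub₂ Q₄ hmem hmem4).2.1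
    simp only [hS₂def] at this
    linarith
  have hQ34 : Q₃ ≠ Q₄ := by
    intro e
    rw [hQ₃def, hQ₄def, Rect.mk.injEq] at e
    linarith [e.1]
  -- the new partition
  refine ⟨(P₁ ∪ P₂) ∪ {Q₃, Q₄}, ⟨?_, ?_, ?_⟩, ?_⟩
  · -- validity
    intro Q hQ
    simp only [Finset.mem_union, Finset.mem_insert, Finset.mem_singleton] at hQ
    rcases hQ with ((h | h) | h | h)
    · exact hP₁.1 Q h
    · exact hP₂.1 Q h
    · rw [h]; exact hQ₃v
    · rw [h]; exact hQ₄v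
  · -- pairwise disjoint open sets
    rw [Finset.coe_union, Finset.coe_union, Finset.coe_insert, Finset.coe_singleton]
    rw [Set.pairwise_union]
    refine ⟨?_, ?_, ?_⟩
    · rw [Set.pairwise_union]
      refine ⟨hP₁.2.1, hP₂.2.1, ?_⟩
      intro a ha b hb _
      have hdis : Disjoint a.openSet b.openSet := by
        refine sep_horiz (m := T/2) ?_ (hP₂.1 b hb) ?_
        · intro x hx
          exact (hsub₁ a ha hx).1.2
        · intro x hx
          exact (hsub₂ b hb hx).1.1
      exact ⟨hdis, hdis.symm⟩
    · intro a ha b hb hab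
      simp only [Set.mem_insert_iff, Set.mem_singleton_iff] at ha hb
      have hdis : Disjoint Q₄.openSet Q₃.openSet := by
        refine sep_vert (m := T/2) ?_ hQ₃v ?_
        · intro x hx
          exact hx.2.2
        · intro x hx
          exact hx.2.1
      rcases ha with rfl | rfl <;> rcases hb with rfl | rfl
      · exact absurd rfl hab
      · exact hdis.symm
      · exact hdis
      · exact absurd rfl hab
    · intro a ha b hb _
      simp only [Set.mem_union, Finset.mem_coe] at ha
      simp only [Set.mem_insert_iff, Set.mem_singleton_iff] at hb
      rcases hb with rfl | hb
      · -- b = Q₃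
        rcases ha with ha | ha
        · have hdis : Disjoint a.openSet Q₃.openSet := by
            refine sep_vert (m := T/2) ?_ hQ₃v ?_
            · intro x hx
              exact (hsub₁ a ha hx).2.2
            · intro x hx
              exact hx.2.1
          exact ⟨hdis, hdis.symm⟩
        · have hdis : Disjoint Q₃.openSet a.openSet := by
            refine sep_horiz (m := T/2) ?_ (hP₂.1 a ha) ?_
            · intro x hx
              exact hx.1.2
            · intro x hx
              exact (hsub₂ a ha hx).1.1
          exact ⟨hdis.symm, hdis⟩
      · subst hb
        rcases ha with ha | ha
        · have hdis : Disjoint a.openSet Q₄.openSet := by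
            refine sep_horiz (m := T/2) ?_ hQ₄v ?_
            · intro x hx
              exact (hsub₁ a ha hx).1.2
            · intro x hx
              exact hx.1.1
          exact ⟨hdis, hdis.symm⟩
        · have hdis : Disjoint Q₄.openSet a.openSet := by
            refine sep_vert (m := T/2) ?_ (hP₂.1 a ha) ?_
            · intro x hx
              exact hx.2.2
            · intro x hx
              exact (hsub₂ a ha hx).2.1
          exact ⟨hdis.symm, hdis⟩
  · -- union
    rw [Finset.set_biUnion_union, Finset.set_biUnion_union, Finset.set_biUnion_insert,
      Finset.set_biUnion_singleton, hP₁.2.2, hP₂.2.2]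
    ext ⟨x, y⟩
    simp only [Set.mem_union, Rect.toSet, hS₁def, hS₂def, hQ₃def, hQ₄def, Set.mem_prod,
      Set.mem_Icc]
    constructor
    · rintro ((⟨⟨h1, h2⟩, h3, h4⟩ | ⟨⟨h1, h2⟩, h3, h4⟩) | ⟨⟨h1, h2⟩, h3, h4⟩ |
        ⟨⟨h1, h2⟩, h3, h4⟩) <;>
        exact ⟨⟨by linarith, by linarith⟩, by linarith, by linarith⟩
    · rintro ⟨⟨h1, h2⟩, h3, h4⟩
      rcases le_total x (T/2) with hx | hx <;> rcases le_total y (T/2) with hy | hy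
      · exact Or.inl (Or.inl ⟨⟨h1, hx⟩, h3, hy⟩)
      · exact Or.inr (Or.inl ⟨⟨h1, hx⟩, hy, h4⟩)
      · exact Or.inr (Or.inr ⟨⟨hx, h2⟩, h3, hy⟩)
      · exact Or.inl (Or.inr ⟨⟨hx, h2⟩, hy, h4⟩)
  · -- the sum
    have hd34 : Disjoint (P₁ ∪ P₂) ({Q₃, Q₄} : Finset Rect) := by
      rw [Finset.disjoint_right]
      intro a ha
      rw [Finset.mem_insert, Finset.mem_singleton] at ha
      rw [Finset.mem_union]
      rcases ha with rfl | rfl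
      · push_neg
        exact ⟨hQ₃P₁, hQ₃P₂⟩
      · push_neg
        exact ⟨hQ₄P₁, hQ₄P₂⟩
    rw [Finset.sum_union hd34, Finset.sum_pair hQ34]
    have hinter : ∑ Q ∈ P₁ ∩ P₂, gT H Q = 0 := by
      refine Finset.sum_eq_zero ?_
      intro Q hQ
      rw [Finset.mem_inter] at hQ
      have hQv := hP₁.1 Q hQ.1
      have hmembd : (Q.b, Q.d) ∈ Q.toSet := ⟨⟨hQv.1, le_rfl⟩, ⟨hQv.2, le_rfl⟩⟩
      have hmemac : (Q.a, Q.c) ∈ Q.toSet := ⟨⟨le_rfl, hQv.1⟩, ⟨le_rfl, hQv.2⟩⟩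
      have hb : Q.b ≤ T/2 := by
        have := (hsub₁ Q hQ.1 hmembd).1.2
        simpa [hS₁def] using this
      have ha' : T/2 ≤ Q.a := by
        have := (hsub₂ Q hQ.2 hmemac).1.1
        simpa [hS₂def] using this
      have hab : Q.a = Q.b := le_antisymm hQv.1 (by linarith)
      have hinc : Rect.inc (fbmCov H) Q = 0 := by
        simp only [Rect.inc, hab]
        ring
      unfold gT
      rw [hinc]
      simp only [abs_zero, ENNReal.ofReal_zero]
      exact ENNReal.zero_rpow_of_pos (by positivity)
    have hPP : ∑ Q ∈ P₁ ∪ P₂, gT H Q = ∑ Q ∈ P₁, gT H Q + ∑ Q ∈ P₂, gT H Q := by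
      rw [← Finset.sum_union_inter, hinter, add_zero]
    have hsum₁ : ∑ Q ∈ P₁, gT H Q = ENNReal.ofReal (1/2) * ∑ Q ∈ P, gT H Q := by
      rw [hP₁def, Finset.sum_image (fun x _ y _ e => aff_injective (by norm_num) e),
        Finset.mul_sum]
      exact Finset.sum_congr rfl fun Q _ => term_aff hH0 (1/2) 0 (by norm_num) Q
    have hsum₂ : ∑ Q ∈ P₂, gT H Q = ∑ Q ∈ P₁, gT H Q := by
      rw [hP₂def, Finset.sum_image (fun x _ y _ e => aff_injective (by norm_num) e)]
      refine Finset.sum_congr rfl fun Q _ => ?_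
      rw [term_aff hH0 1 (T/2) (by norm_num) Q, ENNReal.ofReal_one, one_mul]
    rw [hPP, hsum₂, hsum₁]
    have hhalf : ENNReal.ofReal (1/2) * (∑ Q ∈ P, gT H Q)
        + ENNReal.ofReal (1/2) * (∑ Q ∈ P, gT H Q) = ∑ Q ∈ P, gT H Q := by
      rw [← add_mul, ← ENNReal.ofReal_add (by norm_num) (by norm_num)]
      norm_num
    rw [hhalf]

lemma inc_Q3_neg {H T : ℝ} (hH0 : 0 < H) (hH : H < 1/2) (hT : 0 < T) :
    Rect.inc (fbmCov H) (Rect.mk 0 (T/2) (T/2) T) < 0 := by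
  rw [fbmCov_inc]
  simp only
  have h2T : |T - (0:ℝ)| = T := by rw [sub_zero, abs_of_pos hT]
  have hmid : |T/2 - T/2| = (0:ℝ) := by simp
  have hh : |T - T/2| = T/2 := by
    rw [show T - T/2 = T/2 by ring, abs_of_pos (by linarith)]
  have hh2 : |T/2 - (0:ℝ)| = T/2 := by rw [sub_zero, abs_of_pos (by linarith)]
  rw [h2T, hmid, hh, hh2, Real.zero_rpow (by positivity)]
  have key : T ^ (2*H) < 2 * (T/2) ^ (2*H) := by
    have e : T ^ (2*H) = 2 ^ (2*H) * (T/2) ^ (2*H) := by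
      rw [← Real.mul_rpow (by norm_num) (by linarith)]
      norm_num
      rw [show (2:ℝ) * (T/2) = T by ring]
    rw [e]
    have h2 : (2:ℝ) ^ (2*H) < 2 ^ (1:ℝ) :=
      Real.rpow_lt_rpow_of_exponent_lt one_lt_two (by linarith)
    rw [Real.rpow_one] at h2
    have hpos : (0:ℝ) < (T/2) ^ (2*H) := Real.rpow_pos_of_pos (by linarith) _
    nlinarith
  linarith

lemma cvar_top (H T : ℝ) (hH0 : 0 < H) (hH : H < 1/2) (hT : 0 < T) :
    cVarSum (1 / (2 * H)) (fbmCov H) (Rect.mk 0 T 0 T) = ⊤ := by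
  have heq : cVarSum (1 / (2 * H)) (fbmCov H) (Rect.mk 0 T 0 T)
      = ⨆ P, ⨆ _ : IsPartition (Rect.mk 0 T 0 T) P, ∑ Q ∈ P, gT H Q := rfl
  by_contra hne
  set c : ℝ≥0∞ := gT H (Rect.mk 0 (T/2) (T/2) T) + gT H (Rect.mk (T/2) T 0 (T/2)) with hc
  have hc0 : c ≠ 0 := by
    intro h
    rw [hc, add_eq_zero] at h
    have hpos : 0 < ENNReal.ofReal |Rect.inc (fbmCov H) (Rect.mk 0 (T/2) (T/2) T)| :=
      ENNReal.ofReal_pos.2 (abs_pos.2 (inc_Q3_neg hH0 hH hT).ne)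
    have : (0:ℝ≥0∞) < ENNReal.ofReal |Rect.inc (fbmCov H) (Rect.mk 0 (T/2) (T/2) T)| ^ (1/(2*H)) :=
      ENNReal.rpow_pos hpos ENNReal.ofReal_ne_top
    rw [show gT H (Rect.mk 0 (T/2) (T/2) T)
      = ENNReal.ofReal |Rect.inc (fbmCov H) (Rect.mk 0 (T/2) (T/2) T)| ^ (1/(2*H)) from rfl] at h
    exact this.ne' h.1
  have hstep : ∀ P, IsPartition (Rect.mk 0 T 0 T) P →
      (∑ Q ∈ P, gT H Q) + c ≤ cVarSum (1 / (2 * H)) (fbmCov H) (Rect.mk 0 T 0 T) := by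
    intro P hP
    obtain ⟨P', hP', hsum⟩ := cvar_step hH0 hT hP
    calc (∑ Q ∈ P, gT H Q) + c = ∑ Q ∈ P', gT H Q := hsum.symm
      _ ≤ _ := by
          rw [heq]
          exact le_iSup_of_le P' (le_iSup (fun _ => ∑ Q ∈ P', gT H Q) hP')
  have hex : ∃ P, IsPartition (Rect.mk 0 T 0 T) P :=
    ⟨{Rect.mk 0 T 0 T}, single_partition ⟨hT.le, hT.le⟩⟩
  have hkey : cVarSum (1 / (2 * H)) (fbmCov H) (Rect.mk 0 T 0 T) + c
      ≤ cVarSum (1 / (2 * H)) (fbmCov H) (Rect.mk 0 T 0 T) := by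
    rw [heq, ENNReal.biSup_add' hex]
    exact iSup₂_le fun P hP => hstep P hP
  exact absurd hkey (not_le.2 (ENNReal.lt_add_right hne hc0))

end aux

/-- for `H ∈ (0,1/2)`, the fBM covariance has finite grid
`1/(2H)`-variation on `[0,T]²` but infinite controlled `1/(2H)`-variation. -/
theorem fbmCov_finite_grid_infinite_controlled (H T : ℝ) (hH0 : 0 < H)
    (hH : H < 1 / 2) (hT : 0 < T) :
    gridVarSum (1 / (2 * H)) (fbmCov H) (Rect.mk 0 T 0 T) ≠ ⊤ ∧
    cVarSum (1 / (2 * H)) (fbmCov H) (Rect.mk 0 T 0 T) = ⊤ := by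
  constructor
  · exact ne_top_of_le_ne_top ENNReal.ofReal_ne_top (grid_le H T hH0 hH hT)
  · exact cvar_top H T hH0 hH hT
end

section
/- Let p ≥ 1 with Hölder conjugate p' (1/p + 1/p' = 1), let (Q_j) be a finite partition of [0,T]^2 into essentially disjoint rectangles, let x : [0,T]^2 → ℝ, and set y := Σ_j |x(Q_j)|^{p−1} sgn(x(Q_j)) · 1_{Q̂_j}, where Q̂_j = (a,b]×(c,d] for Q_j = [a,b]×[c,d]. Then the controlled p'-variation of y satisfies |y|_{p'-var;[0,T]^2} ≤ 4 (Σ_j |x(Q_j)|^p)^{1/p'}. -/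
open Set
open scoped ENNReal NNReal

/-- The half-open version `(a,b] × (c,d]` of a rectangle. -/
def Rect.halfOpen (R : Rect) : Set (ℝ × ℝ) := Set.Ioc R.a R.b ×ˢ Set.Ioc R.c R.d


/-!
Write `y = Σ_Q c_Q 1_{Q̂}`. The increment of `1_{Q̂}` over a rectangle `A` is the product of two
one-dimensional increments of indicators of half-open intervals, so it lies in `{-1, 0, 1}`, and it
is nonzero only if each side of `A` has exactly one endpoint in the corresponding side of `Q̂`.
Recording whether that endpoint is the right one, in each coordinate, gives a key in `Bool × Bool`,
and essential disjointness makes this key injective both on the `Q` that meet a given `A` and on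
the `A` that meet a given `Q`. So the matrix `(1_{Q̂}(A))` has at most four nonzero entries in every
row and column, and Jensen's inequality with a double count gives
`Σ_A |y(A)|^{p'} ≤ 4^{p'} Σ_Q |c_Q|^{p'} ≤ 4^{p'} Σ_Q |x(Q)|^p`.
-/

open Finset

theorem abs_indicator_one_sub_indicator_one_le {α : Type*} (s : Set α) (u v : α) :
    |s.indicator (1 : α → ℝ) v - s.indicator 1 u| ≤ 1 := by
  by_cases hv : v ∈ s <;> by_cases hu : u ∈ s <;> simp [hv, hu]

theorem indicator_one_sub_indicator_one_ne_zero_iff {α : Type*} (s : Set α) (u v : α) :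
    s.indicator (1 : α → ℝ) v - s.indicator 1 u ≠ 0 ↔ Xor (v ∈ s) (u ∈ s) := by
  by_cases hv : v ∈ s <;> by_cases hu : u ∈ s <;> simp [hv, hu]

theorem not_disjoint_of_xor_mem {α : Type*} {s s' : Set α} {u v : α} (h : Xor (v ∈ s) (u ∈ s))
    (h' : Xor (v ∈ s') (u ∈ s')) (hv : v ∈ s ↔ v ∈ s') : ¬Disjoint s s' := by
  rw [Set.not_disjoint_iff]
  unfold Xor at h h'
  by_cases hvs : v ∈ s
  · exact ⟨v, hvs, hv.1 hvs⟩
  · exact ⟨u, by tauto, by tauto⟩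

theorem not_disjoint_Ioo_of_xor_mem_Ioc {α : Type*} [LinearOrder α] [DenselyOrdered α]
    {a b u v u' v' : α} (huv : u ≤ v) (hu'v' : u' ≤ v') (h : Xor (v ∈ Ioc a b) (u ∈ Ioc a b))
    (h' : Xor (v' ∈ Ioc a b) (u' ∈ Ioc a b)) (hv : v ∈ Ioc a b ↔ v' ∈ Ioc a b) :
    ¬Disjoint (Ioo u v) (Ioo u' v') := by
  -- both intervals contain `a` if `v ∈ Ioc a b`, and `b` otherwise
  simp only [Set.Ioo_disjoint_Ioo, not_le, max_lt_iff, lt_min_iff]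
  simp only [Xor, Set.mem_Ioc] at h h' hv
  grind

theorem card_le_four_of_injOn {α : Type*} {s : Finset α} (f : α → Bool × Bool)
    (hf : Set.InjOn f s) : #s ≤ 4 :=
  card_le_card_of_injOn (t := univ) f (fun _ _ => mem_coe.2 (mem_univ _)) hf

theorem sum_abs_sum_mul_rpow_le {ι κ : Type*} (s : Finset ι) (t : Finset κ) (c : ι → ℝ)
    (w : ι → κ → ℝ) {N : ℕ} {q : ℝ} (hq : 1 ≤ q) (hw : ∀ i ∈ s, ∀ k ∈ t, |w i k| ≤ 1)
    (hrow : ∀ k ∈ t, #{i ∈ s | w i k ≠ 0} ≤ N) (hcol : ∀ i ∈ s, #{k ∈ t | w i k ≠ 0} ≤ N) :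
    ∑ k ∈ t, |∑ i ∈ s, c i * w i k| ^ q ≤ (N : ℝ) ^ q * ∑ i ∈ s, |c i| ^ q := by
  have hterm : ∀ k ∈ t, |∑ i ∈ s, c i * w i k| ^ q ≤
      (N : ℝ) ^ (q - 1) * ∑ i ∈ s with w i k ≠ 0, |c i| ^ q := by
    intro k hk
    have hsupp : |∑ i ∈ s, c i * w i k| ≤ ∑ i ∈ s with w i k ≠ 0, |c i| := by
      rw [← sum_filter_of_ne (p := fun i => w i k ≠ 0) fun i _ h => right_ne_zero_of_mul h]
      refine (abs_sum_le_sum_abs _ _).trans (sum_le_sum fun i hi => ?_)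
      rw [abs_mul]
      exact mul_le_of_le_one_right (abs_nonneg _) (hw i (mem_filter.1 hi).1 k hk)
    calc |∑ i ∈ s, c i * w i k| ^ q
        ≤ (∑ i ∈ s with w i k ≠ 0, |c i|) ^ q := by gcongr
      _ ≤ (#{i ∈ s | w i k ≠ 0} : ℝ) ^ (q - 1) * ∑ i ∈ s with w i k ≠ 0, |c i| ^ q :=
        Real.rpow_sum_le_const_mul_sum_rpow _ _ hq
      _ ≤ (N : ℝ) ^ (q - 1) * ∑ i ∈ s with w i k ≠ 0, |c i| ^ q := by
        gcongr
        exact_mod_cast hrow k hk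
  have hcount : ∑ k ∈ t, ∑ i ∈ s with w i k ≠ 0, |c i| ^ q ≤ N * ∑ i ∈ s, |c i| ^ q := by
    calc ∑ k ∈ t, ∑ i ∈ s with w i k ≠ 0, |c i| ^ q
        = ∑ i ∈ s, (#{k ∈ t | w i k ≠ 0} : ℝ) * |c i| ^ q := by
          simp_rw [sum_filter]
          rw [sum_comm]
          simp_rw [← sum_filter, sum_const, nsmul_eq_mul]
      _ ≤ ∑ i ∈ s, (N : ℝ) * |c i| ^ q := by
          gcongr with i hi
          exact_mod_cast hcol i hi
      _ = N * ∑ i ∈ s, |c i| ^ q := (mul_sum _ _ _).symm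
  calc ∑ k ∈ t, |∑ i ∈ s, c i * w i k| ^ q
      ≤ ∑ k ∈ t, (N : ℝ) ^ (q - 1) * ∑ i ∈ s with w i k ≠ 0, |c i| ^ q := sum_le_sum hterm
    _ = (N : ℝ) ^ (q - 1) * ∑ k ∈ t, ∑ i ∈ s with w i k ≠ 0, |c i| ^ q := (mul_sum _ _ _).symm
    _ ≤ (N : ℝ) ^ (q - 1) * (N * ∑ i ∈ s, |c i| ^ q) := by gcongr
    _ = (N : ℝ) ^ q * ∑ i ∈ s, |c i| ^ q := by
      rw [← mul_assoc, ← Real.rpow_add_one' (Nat.cast_nonneg N) (by linarith), sub_add_cancel]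

theorem sum_ofReal_abs_rpow {ι : Type*} (s : Finset ι) (f : ι → ℝ) {q : ℝ} (hq : 0 ≤ q) :
    ∑ i ∈ s, ENNReal.ofReal |f i| ^ q = ENNReal.ofReal (∑ i ∈ s, |f i| ^ q) := by
  rw [ENNReal.ofReal_sum_of_nonneg fun i _ => by positivity]
  exact sum_congr rfl fun i _ => ENNReal.ofReal_rpow_of_nonneg (abs_nonneg _) hq

theorem abs_abs_rpow_mul_sign_rpow_le (a : ℝ) {r s : ℝ} (hs : 0 ≤ s) :
    |(|a| ^ r * Real.sign a)| ^ s ≤ |a| ^ (r * s) := by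
  have hsign : |Real.sign a| ≤ 1 := by
    rcases Real.sign_apply_eq a with h | h | h <;> simp [h]
  rw [Real.rpow_mul (abs_nonneg a), abs_mul, abs_of_nonneg (by positivity)]
  gcongr
  exact mul_le_of_le_one_right (by positivity) hsign

namespace Rect

theorem not_disjoint_openSet {Q Q' : Rect} (hx : ¬Disjoint (Ioo Q.a Q.b) (Ioo Q'.a Q'.b))
    (hy : ¬Disjoint (Ioo Q.c Q.d) (Ioo Q'.c Q'.d)) : ¬Disjoint Q.openSet Q'.openSet := by
  rw [Rect.openSet, Rect.openSet, Set.disjoint_prod]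
  tauto

theorem inc_sum_mul {ι : Type*} (s : Finset ι) (c : ι → ℝ) (g : ι → ℝ × ℝ → ℝ) (A : Rect) :
    Rect.inc (fun z => ∑ i ∈ s, c i * g i z) A = ∑ i ∈ s, c i * Rect.inc (g i) A := by
  simp only [Rect.inc, mul_add, mul_sub, sum_add_distrib, sum_sub_distrib]

theorem inc_indicator_halfOpen (Q A : Rect) :
    Rect.inc (Q.halfOpen.indicator fun _ => 1) A =
      ((Ioc Q.a Q.b).indicator 1 A.b - (Ioc Q.a Q.b).indicator 1 A.a) *
        ((Ioc Q.c Q.d).indicator 1 A.d - (Ioc Q.c Q.d).indicator 1 A.c) := by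
  simp only [Rect.inc, Rect.halfOpen, ← Pi.one_def, Set.indicator_prod_one]
  ring

theorem abs_inc_indicator_halfOpen_le (Q A : Rect) :
    |Rect.inc (Q.halfOpen.indicator fun _ => 1) A| ≤ 1 := by
  rw [inc_indicator_halfOpen, abs_mul]
  exact mul_le_one₀ (abs_indicator_one_sub_indicator_one_le _ _ _) (abs_nonneg _)
    (abs_indicator_one_sub_indicator_one_le _ _ _)

theorem inc_indicator_halfOpen_ne_zero_iff (Q A : Rect) :
    Rect.inc (Q.halfOpen.indicator fun _ => 1) A ≠ 0 ↔
      Xor (A.b ∈ Ioc Q.a Q.b) (A.a ∈ Ioc Q.a Q.b) ∧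
        Xor (A.d ∈ Ioc Q.c Q.d) (A.c ∈ Ioc Q.c Q.d) := by
  rw [inc_indicator_halfOpen, mul_ne_zero_iff, indicator_one_sub_indicator_one_ne_zero_iff,
    indicator_one_sub_indicator_one_ne_zero_iff]

theorem card_filter_inc_indicator_halfOpen_ne_zero_le (P : Finset Rect)
    (hP : (P : Set Rect).Pairwise fun Q Q' => Disjoint Q.openSet Q'.openSet) (A : Rect) :
    #{Q ∈ P | Rect.inc (Q.halfOpen.indicator fun _ => 1) A ≠ 0} ≤ 4 := by
  refine card_le_four_of_injOn
    (fun Q => (decide (A.b ∈ Ioc Q.a Q.b), decide (A.d ∈ Ioc Q.c Q.d)))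
    fun Q hQ Q' hQ' hkey => ?_
  simp only [mem_coe, mem_filter, inc_indicator_halfOpen_ne_zero_iff] at hQ hQ'
  simp only [Prod.mk.injEq, decide_eq_decide] at hkey
  by_contra hne
  refine not_disjoint_openSet ?_ ?_ (hP hQ.1 hQ'.1 hne) <;>
    rw [Set.Ioo_disjoint_Ioo, ← Set.Ioc_disjoint_Ioc]
  exacts [not_disjoint_of_xor_mem hQ.2.1 hQ'.2.1 hkey.1,
    not_disjoint_of_xor_mem hQ.2.2 hQ'.2.2 hkey.2]

theorem card_filter_inc_indicator_halfOpen_ne_zero_le' (P : Finset Rect)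
    (hPv : ∀ A ∈ P, A.Valid)
    (hP : (P : Set Rect).Pairwise fun A A' => Disjoint A.openSet A'.openSet) (Q : Rect) :
    #{A ∈ P | Rect.inc (Q.halfOpen.indicator fun _ => 1) A ≠ 0} ≤ 4 := by
  refine card_le_four_of_injOn
    (fun A => (decide (A.b ∈ Ioc Q.a Q.b), decide (A.d ∈ Ioc Q.c Q.d)))
    fun A hA A' hA' hkey => ?_
  simp only [mem_coe, mem_filter, inc_indicator_halfOpen_ne_zero_iff] at hA hA'
  simp only [Prod.mk.injEq, decide_eq_decide] at hkey
  by_contra hne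
  exact not_disjoint_openSet
    (not_disjoint_Ioo_of_xor_mem_Ioc (hPv A hA.1).1 (hPv A' hA'.1).1 hA.2.1 hA'.2.1 hkey.1)
    (not_disjoint_Ioo_of_xor_mem_Ioc (hPv A hA.1).2 (hPv A' hA'.1).2 hA.2.2 hA'.2.2 hkey.2)
    (hP hA.1 hA'.1 hne)

end Rect

theorem cVarSum_sum_mul_indicator_halfOpen_le (P : Finset Rect)
    (hP : (P : Set Rect).Pairwise fun Q Q' => Disjoint Q.openSet Q'.openSet) (c : Rect → ℝ)
    (R : Rect) {q : ℝ} (hq : 1 ≤ q) :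
    cVarSum q (fun z => ∑ Q ∈ P, c Q * Q.halfOpen.indicator (fun _ => 1) z) R ≤
      4 ^ q * ENNReal.ofReal (∑ Q ∈ P, |c Q| ^ q) := by
  refine iSup₂_le fun P' hP' => ?_
  simp_rw [Rect.inc_sum_mul]
  rw [sum_ofReal_abs_rpow _ _ (by linarith)]
  have hschur := sum_abs_sum_mul_rpow_le P P' c
    (fun Q A => Rect.inc (Q.halfOpen.indicator fun _ => 1) A) hq
    (fun Q _ A _ => Rect.abs_inc_indicator_halfOpen_le Q A)
    (fun A _ => Rect.card_filter_inc_indicator_halfOpen_ne_zero_le P hP A)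
    (fun Q _ => Rect.card_filter_inc_indicator_halfOpen_ne_zero_le' P' hP'.1 hP'.2.1 Q)
  calc _ ≤ ENNReal.ofReal ((4 : ℝ) ^ q * ∑ Q ∈ P, |c Q| ^ q) := by
        exact_mod_cast ENNReal.ofReal_le_ofReal hschur
    _ = 4 ^ q * ENNReal.ofReal (∑ Q ∈ P, |c Q| ^ q) := by
      rw [ENNReal.ofReal_mul (by positivity),
        ← ENNReal.ofReal_rpow_of_nonneg (by norm_num) (by linarith)]
      norm_num

theorem controlled_var_of_dual_step_function_general (p p' T : ℝ) (hp : 1 ≤ p)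
    (hconj : 1 / p + 1 / p' = 1)
    (x : ℝ × ℝ → ℝ) (P : Finset Rect) (hP : IsPartition (Rect.mk 0 T 0 T) P)
    (y : ℝ × ℝ → ℝ)
    (hy : y = fun z => ∑ Q ∈ P,
      (|Rect.inc x Q| ^ (p - 1) * Real.sign (Rect.inc x Q)) *
        Set.indicator Q.halfOpen (fun _ => (1 : ℝ)) z) :
    cVarSum p' y (Rect.mk 0 T 0 T) ^ (1 / p') ≤
      4 * (∑ Q ∈ P, ENNReal.ofReal |Rect.inc x Q| ^ p) ^ (1 / p') := by
  rcases hp.eq_or_lt with rfl | hp1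
  · have h0 : 1 / p' = 0 := by linarith
    simp [h0]
  have hpp' : p.HolderConjugate p' := Real.holderConjugate_iff.2 ⟨hp1, by simpa using hconj⟩
  have hdual :
      ENNReal.ofReal (∑ Q ∈ P, |(|Rect.inc x Q| ^ (p - 1) * Real.sign (Rect.inc x Q))| ^ p') ≤
        ∑ Q ∈ P, ENNReal.ofReal |Rect.inc x Q| ^ p := by
    rw [sum_ofReal_abs_rpow _ _ (by linarith)]
    gcongr with Q
    exact (abs_abs_rpow_mul_sign_rpow_le _ hpp'.symm.nonneg).trans_eq
      (by rw [hpp'.sub_one_mul_conj])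
  subst hy
  calc cVarSum p' _ (Rect.mk 0 T 0 T) ^ (1 / p')
      ≤ (4 ^ p' * ∑ Q ∈ P, ENNReal.ofReal |Rect.inc x Q| ^ p) ^ (1 / p') := by
        gcongr
        · exact hpp'.symm.one_div_nonneg
        exact (cVarSum_sum_mul_indicator_halfOpen_le P hP.2.1 _ _ hpp'.symm.lt.le).trans
          (by gcongr)
    _ = 4 * (∑ Q ∈ P, ENNReal.ofReal |Rect.inc x Q| ^ p) ^ (1 / p') := by
      rw [ENNReal.mul_rpow_of_nonneg _ _ hpp'.symm.one_div_nonneg, ← ENNReal.rpow_mul,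
        mul_one_div_cancel hpp'.symm.ne_zero, ENNReal.rpow_one]

/-- with `y := Σ_j |x(Q_j)|^{p-1} sgn(x(Q_j)) 1_{Q̂_j}` for a partition
`(Q_j)` of `[0,T]²`, one has `|y|_{p'-var;[0,T]²} ≤ 4 (Σ_j |x(Q_j)|^p)^{1/p'}`,
where `p'` is the Hölder conjugate of `p`. -/
theorem controlled_var_of_dual_step_function (p p' T : ℝ) (hp : 1 ≤ p)
    (hconj : 1 / p + 1 / p' = 1) (hT : 0 < T)
    (x : ℝ × ℝ → ℝ) (P : Finset Rect) (hP : IsPartition (Rect.mk 0 T 0 T) P)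
    (y : ℝ × ℝ → ℝ)
    (hy : y = fun z => ∑ Q ∈ P,
      (|Rect.inc x Q| ^ (p - 1) * Real.sign (Rect.inc x Q)) *
        Set.indicator Q.halfOpen (fun _ => (1 : ℝ)) z) :
    cVarSum p' y (Rect.mk 0 T 0 T) ^ (1 / p') ≤
      4 * (∑ Q ∈ P, ENNReal.ofReal |Rect.inc x Q| ^ p) ^ (1 / p') :=
  controlled_var_of_dual_step_function_general p p' T hp hconj x P hP y hy
end

section
/- Let p ≥ 1 and let ω(R) := |f|^p_{p-var;R} for f : [0,T]^2 → ℝ of finite controlled p-variation. For adjacent rectangles [a,b]×[s,t] and [a,b]×[t,u], one has ω([a,b]×[s,u]) ≤ ω([a,b]×[s,t]) + ω([a,b]×[t,u]) + p·2^{p−1}·ω([a,b]×[s,u])^{1−1/p}·min{ω([a,b]×[s,t]), ω([a,b]×[t,u])}^{1/p}. -/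
open Set
open scoped ENNReal NNReal

/-!
Cut every rectangle `Q` of a partition of `[a,b] × [s,u]` by the line `y = t` into `Q⁻` and `Q⁺`.
The pieces `Q⁻` partition `[a,b] × [s,t]`, the pieces `Q⁺` partition `[a,b] × [t,u]`, together
they partition `[a,b] × [s,u]`, and `f(Q) = f(Q⁻) + f(Q⁺)`. With `M` and `m` the larger and the
smaller of `|f(Q⁻)|, |f(Q⁺)|`, the mean value theorem gives
`|f(Q)|^p ≤ |f(Q⁻)|^p + |f(Q⁺)|^p + p 2^(p-1) M^(p-1) m`, and Hölder's inequality bounds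
`Σ M^(p-1) m` by `(Σ M^p)^(1-1/p) (Σ m^p)^(1/p)`, where `Σ M^p ≤ ω([a,b] × [s,u])` and
`Σ m^p ≤ min (ω([a,b] × [s,t])) (ω([a,b] × [t,u]))`.
-/

theorem Real.rpow_add_sub_rpow_le {p : ℝ} (hp : 1 ≤ p) {u v M : ℝ} (hu : 0 ≤ u) (hv : 0 ≤ v)
    (huM : u ≤ M) (hvM : v ≤ M) :
    (u + v) ^ p - u ^ p ≤ p * 2 ^ (p - 1) * M ^ (p - 1) * v := by
  have hderiv : ∀ x ∈ interior (Set.Icc 0 (2 * M)), deriv (fun x : ℝ => x ^ p) x ≤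
      p * 2 ^ (p - 1) * M ^ (p - 1) := by
    intro x hx
    rw [interior_Icc] at hx
    rw [Real.deriv_rpow_const, mul_assoc, ← Real.mul_rpow zero_le_two (hu.trans huM)]
    gcongr
    exacts [hx.1.le, hx.2.le]
  simpa using (convex_Icc 0 (2 * M)).image_sub_le_mul_sub_of_deriv_le
    (Real.differentiable_rpow_const hp).continuous.continuousOn
    (Real.differentiable_rpow_const hp).differentiableOn hderiv u ⟨hu, by linarith⟩ (u + v)
    ⟨by linarith, by linarith⟩ (by linarith)

theorem Real.rpow_le_of_le_add {p : ℝ} (hp : 1 ≤ p) {x y z : ℝ} (hx : 0 ≤ x) (hy : 0 ≤ y)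
    (hz : 0 ≤ z) (h : z ≤ x + y) :
    z ^ p ≤ x ^ p + y ^ p + p * 2 ^ (p - 1) * (max x y ^ (p - 1) * min x y) := by
  have hmin : 0 ≤ min x y := le_min hx hy
  have hmax : max x y ^ p ≤ x ^ p + y ^ p := by
    rcases le_total x y with hxy | hxy
    · simpa [max_eq_right hxy] using Real.rpow_nonneg hx p
    · simpa [max_eq_left hxy] using Real.rpow_nonneg hy p
  calc z ^ p ≤ (max x y + min x y) ^ p := by
        rw [max_add_min]; exact Real.rpow_le_rpow hz h (by linarith)
    _ ≤ max x y ^ p + p * 2 ^ (p - 1) * max x y ^ (p - 1) * min x y := by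
        linarith [Real.rpow_add_sub_rpow_le hp (hx.trans (le_max_left x y)) hmin le_rfl
          min_le_max]
    _ ≤ _ := by linarith [mul_assoc (p * 2 ^ (p - 1)) (max x y ^ (p - 1)) (min x y)]

theorem ENNReal.rpow_le_of_le_add {p : ℝ} (hp : 1 ≤ p) {x y z : ℝ≥0∞} (h : z ≤ x + y) :
    z ^ p ≤ x ^ p + y ^ p + ENNReal.ofReal (p * 2 ^ (p - 1)) * (max x y ^ (p - 1) * min x y) := by
  have hp0 : 0 < p := by linarith
  rcases eq_top_or_lt_top x with rfl | hx
  · simp [ENNReal.top_rpow_of_pos hp0]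
  rcases eq_top_or_lt_top y with rfl | hy
  · simp [ENNReal.top_rpow_of_pos hp0]
  lift x to ℝ≥0 using hx.ne
  lift y to ℝ≥0 using hy.ne
  lift z to ℝ≥0 using ((h.trans_lt (ENNReal.add_lt_top.2 ⟨hx, hy⟩)).ne)
  have hreal := Real.rpow_le_of_le_add hp x.2 y.2 z.2 (by exact_mod_cast h)
  rw [← ENNReal.coe_max, ← ENNReal.coe_min, ← ENNReal.coe_rpow_of_nonneg _ hp0.le,
    ← ENNReal.coe_rpow_of_nonneg _ hp0.le, ← ENNReal.coe_rpow_of_nonneg _ hp0.le,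
    ← ENNReal.coe_rpow_of_nonneg _ (by linarith)]
  rw [ENNReal.ofReal]
  norm_cast
  rw [← NNReal.coe_le_coe]
  push_cast
  rwa [Real.coe_toNNReal _ (by positivity)]

theorem ENNReal.sum_rpow_sub_one_mul_le {ι : Type*} (s : Finset ι) (f g : ι → ℝ≥0∞) {p : ℝ}
    (hp : 1 ≤ p) :
    ∑ i ∈ s, f i ^ (p - 1) * g i ≤
      (∑ i ∈ s, f i ^ p) ^ (1 - 1 / p) * (∑ i ∈ s, g i ^ p) ^ (1 / p) := by
  rcases hp.eq_or_lt with rfl | hp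
  · simp
  have hp' : p - 1 ≠ 0 := by linarith
  have hpq : (p / (p - 1)).HolderConjugate p := (Real.HolderConjugate.conjExponent hp).symm
  convert ENNReal.inner_le_Lp_mul_Lq s (fun i => f i ^ (p - 1)) g hpq using 4
  · rw [← ENNReal.rpow_mul]
    field_simp
  · field_simp

theorem ENNReal.sum_rpow_le_of_le_add {ι : Type*} {s : Finset ι} {x y z : ι → ℝ≥0∞} {p : ℝ}
    (hp : 1 ≤ p) (h : ∀ i ∈ s, z i ≤ x i + y i) :
    ∑ i ∈ s, z i ^ p ≤ ∑ i ∈ s, x i ^ p + ∑ i ∈ s, y i ^ p +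
      ENNReal.ofReal (p * 2 ^ (p - 1)) * (∑ i ∈ s, x i ^ p + ∑ i ∈ s, y i ^ p) ^ (1 - 1 / p) *
        min (∑ i ∈ s, x i ^ p) (∑ i ∈ s, y i ^ p) ^ (1 / p) := by
  have hp0 : 0 ≤ p := by linarith
  have hq0 : 0 ≤ 1 - 1 / p := sub_nonneg.2 (div_le_one_of_le₀ hp hp0)
  have hmax : ∑ i ∈ s, max (x i) (y i) ^ p ≤ ∑ i ∈ s, x i ^ p + ∑ i ∈ s, y i ^ p := by
    rw [← Finset.sum_add_distrib]
    gcongr with i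
    rw [(ENNReal.monotone_rpow_of_nonneg hp0).map_max]
    exact max_le le_self_add le_add_self
  have hmin : ∑ i ∈ s, min (x i) (y i) ^ p ≤ min (∑ i ∈ s, x i ^ p) (∑ i ∈ s, y i ^ p) :=
    le_min (by gcongr; exact min_le_left _ _) (by gcongr; exact min_le_right _ _)
  calc ∑ i ∈ s, z i ^ p
      ≤ ∑ i ∈ s, (x i ^ p + y i ^ p +
          ENNReal.ofReal (p * 2 ^ (p - 1)) * (max (x i) (y i) ^ (p - 1) * min (x i) (y i))) :=
        Finset.sum_le_sum fun i hi => ENNReal.rpow_le_of_le_add hp (h i hi)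
    _ = ∑ i ∈ s, x i ^ p + ∑ i ∈ s, y i ^ p + ENNReal.ofReal (p * 2 ^ (p - 1)) *
          ∑ i ∈ s, max (x i) (y i) ^ (p - 1) * min (x i) (y i) := by
        rw [Finset.sum_add_distrib, Finset.sum_add_distrib, Finset.mul_sum]
    _ ≤ _ := by
        rw [mul_assoc]
        gcongr
        refine (ENNReal.sum_rpow_sub_one_mul_le s _ _ hp).trans ?_
        gcongr

namespace Rect

variable (t : ℝ)

/-- When `R` lies above the line `y = t`, `R.below t` is a degenerate rectangle on that line;
dually for `R.above t`. -/
def below (R : Rect) : Rect := ⟨R.a, R.b, min R.c t, min R.d t⟩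

def above (R : Rect) : Rect := ⟨R.a, R.b, max R.c t, max R.d t⟩

variable {t}

theorem inc_eq_inc_below_add_inc_above (f : ℝ × ℝ → ℝ) (R : Rect) :
    R.inc f = (R.below t).inc f + (R.above t).inc f := by
  rcases le_total R.c t with hc | hc <;> rcases le_total R.d t with hd | hd <;>
    simp only [inc, below, above, min_eq_left, min_eq_right, max_eq_left, max_eq_right, hc, hd] <;>
    ring

theorem Valid.below {R : Rect} (hR : R.Valid) : (R.below t).Valid :=
  ⟨hR.1, min_le_min_right t hR.2⟩

theorem Valid.above {R : Rect} (hR : R.Valid) : (R.above t).Valid :=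
  ⟨hR.1, max_le_max_right t hR.2⟩

theorem openSet_below_subset (R : Rect) :
    (R.below t).openSet ⊆ R.openSet ∩ {x | x.2 < t} := by
  rintro x ⟨hx1, hc, hd⟩
  have hxt : x.2 < t := hd.trans_le (min_le_right _ _)
  refine ⟨⟨hx1, ?_, hd.trans_le (min_le_left _ _)⟩, hxt⟩
  exact (min_lt_iff.1 hc).resolve_right hxt.not_gt

theorem openSet_above_subset (R : Rect) :
    (R.above t).openSet ⊆ R.openSet ∩ {x | t < x.2} := by
  rintro x ⟨hx1, hc, hd⟩
  have hxt : t < x.2 := (le_max_right _ _).trans_lt hc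
  refine ⟨⟨hx1, (le_max_left _ _).trans_lt hc, ?_⟩, hxt⟩
  exact (lt_max_iff.1 hd).resolve_right hxt.not_gt

theorem disjoint_openSet_below_above (R Q : Rect) :
    Disjoint (R.below t).openSet (Q.above t).openSet :=
  Set.disjoint_left.2 fun x hR hQ =>
    lt_asymm (show x.2 < t from (openSet_below_subset R hR).2) (openSet_above_subset Q hQ).2

theorem toSet_inter_subset_below (R : Rect) : R.toSet ∩ {x | x.2 ≤ t} ⊆ (R.below t).toSet :=
  fun _ ⟨⟨hx1, hc, hd⟩, hxt⟩ => ⟨hx1, min_le_of_left_le hc, le_min hd hxt⟩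

theorem toSet_inter_subset_above (R : Rect) : R.toSet ∩ {x | t ≤ x.2} ⊆ (R.above t).toSet :=
  fun _ ⟨⟨hx1, hc, hd⟩, hxt⟩ => ⟨hx1, max_le hc hxt, le_max_of_le_left hd⟩

theorem toSet_subset_toSet_iff {Q R : Rect} (hQ : Q.Valid) :
    Q.toSet ⊆ R.toSet ↔ (R.a ≤ Q.a ∧ Q.b ≤ R.b) ∧ R.c ≤ Q.c ∧ Q.d ≤ R.d := by
  rw [toSet, toSet,
    Set.prod_subset_prod_iff' ((Set.nonempty_Icc.2 hQ.1).prod (Set.nonempty_Icc.2 hQ.2)),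
    Set.Icc_subset_Icc_iff hQ.1, Set.Icc_subset_Icc_iff hQ.2]

theorem inc_eq_zero_of_openSet_eq_empty (f : ℝ × ℝ → ℝ) {R : Rect} (hR : R.Valid)
    (h : R.openSet = ∅) : R.inc f = 0 := by
  rcases Set.prod_eq_empty_iff.1 h with h | h <;> rw [Set.Ioo_eq_empty_iff, not_lt] at h
  · simp [inc, le_antisymm hR.1 h]
  · simp [inc, le_antisymm hR.2 h]

theorem toSet_union_toSet (a b : ℝ) {s t u : ℝ} (hst : s ≤ t) (htu : t ≤ u) :
    (mk a b s t).toSet ∪ (mk a b t u).toSet = (mk a b s u).toSet := by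
  rw [toSet, toSet, toSet, ← Set.prod_union, Set.Icc_union_Icc_eq_Icc hst htu]

end Rect

/-- A partition of `R` indexed by `s`; distinct indices may name the same rectangle, which is
then degenerate. -/
def IsIndexedPartition {ι : Type*} (R : Rect) (s : Finset ι) (φ : ι → Rect) : Prop :=
  (∀ i ∈ s, (φ i).Valid) ∧ (s : Set ι).PairwiseDisjoint (fun i => (φ i).openSet) ∧
    ⋃ i ∈ s, (φ i).toSet = R.toSet

namespace IsIndexedPartition

variable {ι κ : Type*} {R : Rect} {s : Finset ι} {φ : ι → Rect}

theorem isPartition_image (h : IsIndexedPartition R s φ) : IsPartition R (s.image φ) := by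
  refine ⟨Finset.forall_mem_image.2 h.1, ?_, ?_⟩
  · simp only [Finset.coe_image]
    rintro _ ⟨i, hi, rfl⟩ _ ⟨j, hj, rfl⟩ hne
    exact h.2.1 hi hj fun hij => hne (hij ▸ rfl)
  · rw [Finset.set_biUnion_finset_image]
    exact h.2.2

theorem sum_le_cVarSum (h : IsIndexedPartition R s φ) {p : ℝ} (hp : 0 < p) (f : ℝ × ℝ → ℝ) :
    ∑ i ∈ s, ENNReal.ofReal |(φ i).inc f| ^ p ≤ cVarSum p f R := by
  set g : Rect → ℝ≥0∞ := fun A => ENNReal.ofReal |A.inc f| ^ p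
  have hinj : Set.InjOn φ (s.filter fun i => g (φ i) ≠ 0) := by
    intro i hi j hj hij
    by_contra hne
    obtain ⟨hi, hgi⟩ := Finset.mem_filter.1 hi
    have hdisj : Disjoint (φ i).openSet (φ j).openSet := h.2.1 hi (Finset.mem_filter.1 hj).1 hne
    rw [← hij, disjoint_self, Set.bot_eq_empty] at hdisj
    apply hgi
    simp [g, Rect.inc_eq_zero_of_openSet_eq_empty f (h.1 i hi) hdisj,
      ENNReal.zero_rpow_of_pos hp]
  calc ∑ i ∈ s, g (φ i) = ∑ i ∈ s.filter (fun i => g (φ i) ≠ 0), g (φ i) :=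
        (Finset.sum_filter_ne_zero _).symm
    _ = ∑ A ∈ (s.filter fun i => g (φ i) ≠ 0).image φ, g A := (Finset.sum_image hinj).symm
    _ ≤ ∑ A ∈ s.image φ, g A :=
        Finset.sum_le_sum_of_subset (Finset.image_subset_image (Finset.filter_subset _ _))
    _ ≤ cVarSum p f R := le_iSup₂_of_le (s.image φ) h.isPartition_image le_rfl

theorem disjSum {R₁ R₂ : Rect} {s' : Finset κ} {ψ : κ → Rect} (h₁ : IsIndexedPartition R₁ s φ)
    (h₂ : IsIndexedPartition R₂ s' ψ)
    (hdisj : ∀ i ∈ s, ∀ j ∈ s', Disjoint (φ i).openSet (ψ j).openSet)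
    (hR : R₁.toSet ∪ R₂.toSet = R.toSet) :
    IsIndexedPartition R (s.disjSum s') (Sum.elim φ ψ) := by
  refine ⟨?_, ?_, ?_⟩
  · rintro (i | j) hij
    exacts [h₁.1 i (Finset.inl_mem_disjSum.1 hij), h₂.1 j (Finset.inr_mem_disjSum.1 hij)]
  · rintro (i | j) hi (i' | j') hi' hne <;>
      simp only [Finset.mem_coe, Finset.inl_mem_disjSum, Finset.inr_mem_disjSum] at hi hi'
    · exact h₁.2.1 hi hi' fun e => hne (congrArg _ e)
    · exact hdisj i hi j' hi'
    · exact (hdisj i' hi' j hi).symm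
    · exact h₂.2.1 hi hi' fun e => hne (congrArg _ e)
  · rw [← hR, ← h₁.2.2, ← h₂.2.2]
    ext x
    simp

end IsIndexedPartition

namespace IsPartition

variable {P : Finset Rect} {a b s t u : ℝ}

theorem isIndexedPartition_below (hP : IsPartition ⟨a, b, s, u⟩ P) (hst : s ≤ t) (htu : t ≤ u) :
    IsIndexedPartition ⟨a, b, s, t⟩ P (Rect.below t) := by
  obtain ⟨hval, hdisj, hcov⟩ := hP
  refine ⟨fun Q hQ => (hval Q hQ).below,
    Set.PairwiseDisjoint.mono_on (f := Rect.openSet) hdisj fun Q _ =>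
      (Q.openSet_below_subset).trans Set.inter_subset_left, ?_⟩
  refine (Set.iUnion₂_subset fun Q hQ => ?_).antisymm fun x hx => ?_
  · have hQR := (Rect.toSet_subset_toSet_iff (hval Q hQ)).1
      (hcov ▸ Set.subset_biUnion_of_mem (u := Rect.toSet) hQ)
    exact (Rect.toSet_subset_toSet_iff (hval Q hQ).below).2
      ⟨hQR.1, le_min hQR.2.1 hst, min_le_right _ _⟩
  · have hxR : x ∈ (Rect.mk a b s u).toSet := ⟨hx.1, hx.2.1, hx.2.2.trans htu⟩
    rw [← hcov] at hxR
    obtain ⟨Q, hQ, hxQ⟩ := Set.mem_iUnion₂.1 hxR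
    exact Set.mem_iUnion₂.2 ⟨Q, hQ, Q.toSet_inter_subset_below ⟨hxQ, hx.2.2⟩⟩

theorem isIndexedPartition_above (hP : IsPartition ⟨a, b, s, u⟩ P) (hst : s ≤ t) (htu : t ≤ u) :
    IsIndexedPartition ⟨a, b, t, u⟩ P (Rect.above t) := by
  obtain ⟨hval, hdisj, hcov⟩ := hP
  refine ⟨fun Q hQ => (hval Q hQ).above,
    Set.PairwiseDisjoint.mono_on (f := Rect.openSet) hdisj fun Q _ =>
      (Q.openSet_above_subset).trans Set.inter_subset_left, ?_⟩
  refine (Set.iUnion₂_subset fun Q hQ => ?_).antisymm fun x hx => ?_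
  · have hQR := (Rect.toSet_subset_toSet_iff (hval Q hQ)).1
      (hcov ▸ Set.subset_biUnion_of_mem (u := Rect.toSet) hQ)
    exact (Rect.toSet_subset_toSet_iff (hval Q hQ).above).2
      ⟨hQR.1, le_max_right _ _, max_le hQR.2.2 htu⟩
  · have hxR : x ∈ (Rect.mk a b s u).toSet := ⟨hx.1, hst.trans hx.2.1, hx.2.2⟩
    rw [← hcov] at hxR
    obtain ⟨Q, hQ, hxQ⟩ := Set.mem_iUnion₂.1 hxR
    exact Set.mem_iUnion₂.2 ⟨Q, hQ, Q.toSet_inter_subset_above ⟨hxQ, hx.2.1⟩⟩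

end IsPartition

theorem controlled_var_almost_subadditive_general (p : ℝ) (hp : 1 ≤ p)
    (f : ℝ × ℝ → ℝ)
    (a b s t u : ℝ) (hst : s ≤ t) (htu : t ≤ u) :
    cVarSum p f (Rect.mk a b s u) ≤
      cVarSum p f (Rect.mk a b s t) + cVarSum p f (Rect.mk a b t u) +
        ENNReal.ofReal (p * 2 ^ (p - 1)) *
          cVarSum p f (Rect.mk a b s u) ^ (1 - 1 / p) *
          (min (cVarSum p f (Rect.mk a b s t)) (cVarSum p f (Rect.mk a b t u))) ^ (1 / p) := by
  have hp0 : 0 < p := by linarith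
  have hq : 0 ≤ 1 - 1 / p := sub_nonneg.2 (div_le_one_of_le₀ hp hp0.le)
  refine iSup₂_le fun P hP => ?_
  have hbelow := hP.isIndexedPartition_below hst htu
  have habove := hP.isIndexedPartition_above hst htu
  have hlow := hbelow.sum_le_cVarSum hp0 f
  have hhigh := habove.sum_le_cVarSum hp0 f
  have hboth := (hbelow.disjSum habove (fun Q _ Q' _ => Q.disjoint_openSet_below_above Q')
    (Rect.toSet_union_toSet a b hst htu)).sum_le_cVarSum hp0 f
  simp only [Finset.sum_disjSum, Sum.elim_inl, Sum.elim_inr] at hboth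
  refine (ENNReal.sum_rpow_le_of_le_add (x := fun Q => ENNReal.ofReal |(Q.below t).inc f|)
    (y := fun Q => ENNReal.ofReal |(Q.above t).inc f|) hp fun Q _ => ?_).trans (by gcongr)
  rw [Q.inc_eq_inc_below_add_inc_above f (t := t)]
  exact (ENNReal.ofReal_le_ofReal (abs_add_le _ _)).trans ENNReal.ofReal_add_le

/-- almost sub-additivity of `ω(R) = |f|^p_{p-var;R}` for adjacent
rectangles `[a,b]×[s,t]` and `[a,b]×[t,u]`:
`ω([a,b]×[s,u]) ≤ ω([a,b]×[s,t]) + ω([a,b]×[t,u])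
  + p 2^{p-1} ω([a,b]×[s,u])^{1-1/p} min{ω([a,b]×[s,t]), ω([a,b]×[t,u])}^{1/p}`. -/
theorem controlled_var_almost_subadditive (p T : ℝ) (hp : 1 ≤ p) (hT : 0 < T)
    (f : ℝ × ℝ → ℝ) (hf : cVarSum p f (Rect.mk 0 T 0 T) ≠ ⊤)
    (a b s t u : ℝ) (h0a : 0 ≤ a) (hab : a ≤ b) (hbT : b ≤ T)
    (h0s : 0 ≤ s) (hst : s ≤ t) (htu : t ≤ u) (huT : u ≤ T) :
    cVarSum p f (Rect.mk a b s u) ≤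
      cVarSum p f (Rect.mk a b s t) + cVarSum p f (Rect.mk a b t u) +
        ENNReal.ofReal (p * 2 ^ (p - 1)) *
          cVarSum p f (Rect.mk a b s u) ^ (1 - 1 / p) *
          (min (cVarSum p f (Rect.mk a b s t)) (cVarSum p f (Rect.mk a b t u))) ^ (1 / p) :=
  controlled_var_almost_subadditive_general p hp f a b s t u hst htu
end

section
/- Let p, q ≥ 1 with θ = 1/p + 1/q > 1, and let x, y : [0,T] → ℝ have finite p- resp. q-variation. For any dissection D = (0 = t_0 < ... < t_n = T) with n ≥ 2, there exists an index i_0 ∈ {1,...,n−1} such that |∫_D y dx − ∫_{D∖{t_{i_0}}} y dx| ≤ (n−1)^{−θ} |x|_{p-var;[0,T]} |y|_{q-var;[0,T]}, where ∫_D y dx := Σ_{i=1}^n y_{t_i} (x_{t_i} − x_{t_{i−1}}). -/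
open Set
open scoped ENNReal NNReal

/-- The 1D `p`-variation of `x` on `[s,t]`, raised to the power `p`: the supremum
over dissections of `Σ_k |x_{u_{k+1}} - x_{u_k}|^p`.  So
`|x|_{p-var;[s,t]} = (var1D p x s t) ^ (1/p)`. -/
noncomputable def var1D (p : ℝ) (x : ℝ → ℝ) (s t : ℝ) : ℝ≥0∞ :=
  ⨆ (n : ℕ) (u : Fin (n + 1) → ℝ) (_ : Monotone u)
    (_ : u 0 = s) (_ : u (Fin.last n) = t),
    ∑ i : Fin n, ENNReal.ofReal |x (u i.succ) - x (u i.castSucc)| ^ p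

/-- The discrete integral `∫_D y dx = Σ_{i=1}^n y_{t_i}(x_{t_i} - x_{t_{i-1}})`
over the dissection `D = (t_0, …, t_n)`. -/
noncomputable def discInt (n : ℕ) (t : Fin (n + 1) → ℝ) (y x : ℝ → ℝ) : ℝ :=
  ∑ i : Fin n, y (t i.succ) * (x (t i.succ) - x (t i.castSucc))

/-- `ζ(s) = Σ_{n≥1} n^{-s}` (Riemann zeta as a real series). -/
noncomputable def zetaSum (s : ℝ) : ℝ := ∑' n : ℕ, ((n : ℝ) + 1) ^ (-s)

/-!
Removing the interior point `t_{k+1}` changes `∫_D y dx` by exactly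
`(y_{t_{k+1}} - y_{t_{k+2}}) (x_{t_{k+1}} - x_{t_k}) = a_k b_k`, the product of the `k`-th
increment of `x` and the `(k+1)`-st increment of `y`. The smallest of the `n - 1` numbers
`(a_k b_k)^{1/θ}` is at most their mean, and Hölder's inequality with the conjugate exponents
`pθ`, `qθ` bounds their sum by `((Σ a_k^p)^{1/p} (Σ b_k^q)^{1/q})^{1/θ}`; both sums are dominated
by the variations over the dissection `D` itself.
-/

open Finset

theorem Fin.succAbove_castSucc_succ_succAbove {n : ℕ} (k : Fin (n + 1)) (i : Fin n) :
    k.succ.castSucc.succAbove (k.succAbove i).succ = (k.succ.succAbove (k.succAbove i)).succ ∧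
      k.succ.castSucc.succAbove (k.succAbove i).castSucc =
        (k.succ.succAbove (k.succAbove i)).castSucc := by
  rcases lt_or_ge i.castSucc k with h | h
  · rw [Fin.succAbove_of_castSucc_lt _ _ h]
    constructor <;> ext <;>
      simp only [Fin.succAbove, Fin.lt_def, Fin.val_castSucc, Fin.val_succ] at h ⊢ <;>
      split_ifs <;> simp only [Fin.val_castSucc, Fin.val_succ] <;> omega
  · rw [Fin.succAbove_of_le_castSucc _ _ h]
    constructor <;> ext <;>
      simp only [Fin.succAbove, Fin.le_def, Fin.lt_def, Fin.val_castSucc, Fin.val_succ] at h ⊢ <;>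
      split_ifs <;> simp only [Fin.val_castSucc, Fin.val_succ] <;> omega

theorem discInt_sub_discInt_succAbove {n : ℕ} (t : Fin (n + 3) → ℝ) (y x : ℝ → ℝ)
    (k : Fin (n + 1)) :
    discInt (n + 2) t y x - discInt (n + 1) (fun j => t (k.succ.castSucc.succAbove j)) y x =
      (y (t k.succ.castSucc) - y (t k.succ.succ)) *
        (x (t k.castSucc.succ) - x (t k.castSucc.castSucc)) := by
  rw [discInt, discInt, Fin.sum_univ_succAbove _ k.succ, Fin.sum_univ_succAbove _ k,
    Fin.sum_univ_succAbove _ k]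
  simp only [Fin.succAbove_castSucc_succ_succAbove, Fin.succAbove_succ_self,
    Fin.succAbove_castSucc_self, Fin.succ_castSucc,
    Fin.succAbove_castSucc_of_lt _ _ k.castSucc_lt_succ]
  ring

theorem ENNReal.sum_mul_rpow_le {ι : Type*} (s : Finset ι) (f g : ι → ℝ≥0∞) {p q : ℝ}
    (hp : 0 < p) (hq : 0 < q) :
    ∑ i ∈ s, (f i * g i) ^ (1 / p + 1 / q)⁻¹ ≤
      ((∑ i ∈ s, f i ^ p) ^ (1 / p) * (∑ i ∈ s, g i ^ q) ^ (1 / q)) ^ (1 / p + 1 / q)⁻¹ := by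
  set θ := 1 / p + 1 / q
  have hθ : 0 < θ := by positivity
  have hconj : (p * θ).HolderConjugate (q * θ) := by
    rw [Real.holderConjugate_iff]
    refine ⟨?_, by simp only [θ]; field_simp⟩
    simp only [θ, mul_add, mul_one_div_cancel hp.ne']
    have : 0 < p * (1 / q) := by positivity
    linarith
  have hpow (r : ℝ) (h : ι → ℝ≥0∞) (i : ι) : (h i ^ θ⁻¹) ^ (r * θ) = h i ^ r := by
    rw [← ENNReal.rpow_mul]; congr 1; field_simp
  have hroot (r : ℝ) (S : ℝ≥0∞) : S ^ (1 / (r * θ)) = (S ^ (1 / r)) ^ θ⁻¹ := by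
    rw [← ENNReal.rpow_mul]; congr 1; field_simp
  calc ∑ i ∈ s, (f i * g i) ^ θ⁻¹ = ∑ i ∈ s, f i ^ θ⁻¹ * g i ^ θ⁻¹ := by
        simp only [ENNReal.mul_rpow_of_nonneg _ _ (inv_nonneg.mpr hθ.le)]
    _ ≤ (∑ i ∈ s, (f i ^ θ⁻¹) ^ (p * θ)) ^ (1 / (p * θ)) *
          (∑ i ∈ s, (g i ^ θ⁻¹) ^ (q * θ)) ^ (1 / (q * θ)) :=
        ENNReal.inner_le_Lp_mul_Lq s _ _ hconj
    _ = _ := by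
        simp only [hpow p, hpow q, hroot p, hroot q,
          ENNReal.mul_rpow_of_nonneg _ _ (inv_nonneg.mpr hθ.le)]

theorem ENNReal.exists_mul_le_card_inv_rpow_mul {ι : Type*} (s : Finset ι) (hs : s.Nonempty)
    (f g : ι → ℝ≥0∞) {p q : ℝ} (hp : 0 < p) (hq : 0 < q) :
    ∃ i ∈ s, f i * g i ≤ (#s : ℝ≥0∞)⁻¹ ^ (1 / p + 1 / q) *
      (∑ i ∈ s, f i ^ p) ^ (1 / p) * (∑ i ∈ s, g i ^ q) ^ (1 / q) := by
  set θ := 1 / p + 1 / q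
  have hθ : 0 < θ := by positivity
  obtain ⟨i, hi, hmin⟩ := s.exists_min_image (fun i => f i * g i) hs
  refine ⟨i, hi, ?_⟩
  have hcard : (#s : ℝ≥0∞) * (f i * g i) ^ θ⁻¹ ≤
      ((∑ i ∈ s, f i ^ p) ^ (1 / p) * (∑ i ∈ s, g i ^ q) ^ (1 / q)) ^ θ⁻¹ := by
    rw [← nsmul_eq_mul]
    refine (s.card_nsmul_le_sum _ _ fun j hj => ?_).trans (ENNReal.sum_mul_rpow_le s f g hp hq)
    exact ENNReal.rpow_le_rpow (hmin j hj) (inv_nonneg.mpr hθ.le)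
  rw [ENNReal.mul_le_iff_le_inv (by simpa using hs.ne_empty) (ENNReal.natCast_ne_top _)] at hcard
  calc f i * g i = ((f i * g i) ^ θ⁻¹) ^ θ := (ENNReal.rpow_inv_rpow hθ.ne' _).symm
    _ ≤ ((#s : ℝ≥0∞)⁻¹ * ((∑ i ∈ s, f i ^ p) ^ (1 / p) * (∑ i ∈ s, g i ^ q) ^ (1 / q)) ^ θ⁻¹) ^ θ :=
        ENNReal.rpow_le_rpow hcard hθ.le
    _ = _ := by
        rw [ENNReal.mul_rpow_of_nonneg _ _ hθ.le, ENNReal.rpow_inv_rpow hθ.ne', mul_assoc]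

theorem sum_rpow_le_var1D (p : ℝ) (x : ℝ → ℝ) {s t : ℝ} {n : ℕ} (u : Fin (n + 1) → ℝ)
    (hu : Monotone u) (h0 : u 0 = s) (hlast : u (Fin.last n) = t) :
    ∑ i : Fin n, ENNReal.ofReal |x (u i.succ) - x (u i.castSucc)| ^ p ≤ var1D p x s t :=
  le_iSup_of_le n <| le_iSup_of_le u <| le_iSup_of_le hu <| le_iSup_of_le h0 <|
    le_iSup_of_le hlast le_rfl

theorem young_point_removal_general (p q T : ℝ) (hp : 1 ≤ p) (hq : 1 ≤ q) (x y : ℝ → ℝ) (m : ℕ)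
    (t : Fin (m + 3) → ℝ) (ht : StrictMono t) (h0 : t 0 = 0) (hlast : t (Fin.last (m + 2)) = T) :
    ∃ i₀ : Fin (m + 3), i₀ ≠ 0 ∧ i₀ ≠ Fin.last (m + 2) ∧
      ENNReal.ofReal
          |discInt (m + 2) t y x - discInt (m + 1) (fun j => t (i₀.succAbove j)) y x| ≤
        ((m + 1 : ℝ≥0∞))⁻¹ ^ (1 / p + 1 / q) *
          var1D p x 0 T ^ (1 / p) * var1D q y 0 T ^ (1 / q) := by
  set δ : (ℝ → ℝ) → Fin (m + 2) → ℝ≥0∞ :=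
    fun z i => ENNReal.ofReal |z (t i.succ) - z (t i.castSucc)|
  have hvar (r : ℝ) (z : ℝ → ℝ) : ∑ i, δ z i ^ r ≤ var1D r z 0 T :=
    sum_rpow_le_var1D r z t ht.monotone h0 hlast
  obtain ⟨k, -, hk⟩ := ENNReal.exists_mul_le_card_inv_rpow_mul univ univ_nonempty
    (fun k : Fin (m + 1) => δ x k.castSucc) (fun k => δ y k.succ) (zero_lt_one.trans_le hp)
    (zero_lt_one.trans_le hq)
  refine ⟨k.succ.castSucc, Fin.castSucc_ne_zero_iff.mpr (Fin.succ_ne_zero k),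
    Fin.castSucc_ne_last _, ?_⟩
  rw [discInt_sub_discInt_succAbove, abs_mul, ENNReal.ofReal_mul (abs_nonneg _), mul_comm,
    abs_sub_comm (y _)]
  refine hk.trans ?_
  rw [card_univ, Fintype.card_fin, Nat.cast_add_one]
  gcongr
  · refine le_trans ?_ (hvar p x)
    rw [Fin.sum_univ_castSucc (fun i => δ x i ^ p)]
    exact le_self_add
  · refine le_trans ?_ (hvar q y)
    rw [Fin.sum_univ_succ (fun i => δ y i ^ q)]
    exact le_add_self

/-- one-point removal estimate for discrete Young integrals.  For a
dissection `0 = t_0 < … < t_n = T` with `n = m+2 ≥ 2` intervals there is an interior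
point whose removal changes `∫_D y dx` by at most
`(n-1)^{-θ} |x|_{p-var} |y|_{q-var}`, `θ = 1/p + 1/q > 1`. -/
theorem young_point_removal (p q T : ℝ) (hp : 1 ≤ p) (hq : 1 ≤ q)
    (hθ : 1 < 1 / p + 1 / q) (hT : 0 < T) (x y : ℝ → ℝ)
    (hx : var1D p x 0 T ≠ ⊤) (hy : var1D q y 0 T ≠ ⊤)
    (m : ℕ) (t : Fin (m + 3) → ℝ) (ht : StrictMono t)
    (h0 : t 0 = 0) (hlast : t (Fin.last (m + 2)) = T) :
    ∃ i₀ : Fin (m + 3), i₀ ≠ 0 ∧ i₀ ≠ Fin.last (m + 2) ∧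
      ENNReal.ofReal
          |discInt (m + 2) t y x - discInt (m + 1) (fun j => t (i₀.succAbove j)) y x| ≤
        ((m + 1 : ℝ≥0∞))⁻¹ ^ (1 / p + 1 / q) *
          var1D p x 0 T ^ (1 / p) * var1D q y 0 T ^ (1 / q) :=
  young_point_removal_general p q T hp hq x y m t ht h0 hlast
end

section
/- (Young's maximal inequality, discrete form) Let p, q ≥ 1 with θ = 1/p + 1/q > 1 and x, y : [0,T] → ℝ of finite p- resp. q-variation with y_0 = 0. Then for every dissection D of [0,T], |Σ_{i=1}^n y_{t_i}(x_{t_i} − x_{t_{i−1}})| ≤ (1 + ζ(θ)) |x|_{p-var;[0,T]} |y|_{q-var;[0,T]}, where ζ is the Riemann zeta function. -/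
open Set
open scoped ENNReal NNReal

/-!
Deleting an interior point `t_j` of `D` changes `∫_D y dx` by
`(y_{t_j} - y_{t_{j+1}}) (x_{t_j} - x_{t_{j-1}})`. If `D` has `N + 1` intervals, Hölder's
inequality with exponents `pθ` and `qθ`, applied to the `θ⁻¹`-th powers of these `N` products,
shows that one of them is at most `N^{-θ} |x|_{p-var} |y|_{q-var}`. Deleting such points one at
a time down to `{0, T}`, where `∫ y dx = (y_T - y_0)(x_T - x_0)`, costs in total at most
`ζ(θ) |x|_{p-var} |y|_{q-var}`.
-/

open Finset

noncomputable def stieltjesSum (y x : ℝ → ℝ) (f : ℕ → ℝ) (N : ℕ) : ℝ :=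
  ∑ i ∈ range N, y (f (i + 1)) * (x (f (i + 1)) - x (f i))

lemma discInt_eq_stieltjesSum (n : ℕ) (t : Fin (n + 1) → ℝ) (y x : ℝ → ℝ) :
    discInt n t y x = stieltjesSum y x (fun i => t (Fin.clamp i n)) n := by
  rw [discInt, stieltjesSum, ← Fin.sum_univ_eq_sum_range]
  refine sum_congr rfl fun i _ => ?_
  have hsucc : Fin.clamp (i + 1) n = i.succ := Fin.ext (by simp)
  have hcast : Fin.clamp i n = i.castSucc := Fin.ext (by simp [i.isLt.le])
  rw [hsucc, hcast]

def skipIndex (j i : ℕ) : ℕ := if i ≤ j then i else i + 1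

lemma monotone_skipIndex (j : ℕ) : Monotone (skipIndex j) := by
  intro i i' h
  unfold skipIndex
  split_ifs <;> omega

lemma stieltjesSum_eq_comp_skipIndex_add (y x : ℝ → ℝ) (f : ℕ → ℝ) {j m : ℕ}
    (hjm : j < m) :
    stieltjesSum y x f (m + 1) = stieltjesSum y x (f ∘ skipIndex j) m
      + (y (f (j + 1)) - y (f (j + 2))) * (x (f (j + 1)) - x (f j)) := by
  induction m, hjm using Nat.le_induction with
  | base =>
    have hlow : ∀ i ∈ range j, y (f (skipIndex j (i + 1))) * (x (f (skipIndex j (i + 1)))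
        - x (f (skipIndex j i))) = y (f (i + 1)) * (x (f (i + 1)) - x (f i)) := by
      intro i hi
      have hi := mem_range.1 hi
      simp only [skipIndex, if_pos hi.le, if_pos (Nat.succ_le_of_lt hi)]
    simp only [stieltjesSum, Function.comp_apply, sum_range_succ, sum_congr rfl hlow]
    simp only [skipIndex, le_refl, if_true, Nat.not_succ_le_self, if_false]
    ring
  | succ m hjm ih =>
    rw [stieltjesSum, sum_range_succ, ← stieltjesSum, ih, stieltjesSum, stieltjesSum,
      sum_range_succ (n := m)]
    simp only [Function.comp_apply, skipIndex, if_neg (by omega : ¬m ≤ j),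
      if_neg (by omega : ¬m + 1 ≤ j)]
    ring

section Variation

variable {p : ℝ} {x : ℝ → ℝ} {s t : ℝ} {f : ℕ → ℝ} {N : ℕ}

lemma sum_ofReal_abs_sub_rpow_le_var1D (hf : Monotone f) (h0 : f 0 = s) (hN : f N = t) :
    ∑ i ∈ range N, ENNReal.ofReal |x (f (i + 1)) - x (f i)| ^ p ≤ var1D p x s t := by
  rw [← Fin.sum_univ_eq_sum_range (fun i => ENNReal.ofReal |x (f (i + 1)) - x (f i)| ^ p)]
  exact le_iSup_of_le N <| le_iSup_of_le (fun i : Fin (N + 1) => f i) <|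
    le_iSup_of_le (fun i j hij => hf hij) <| le_iSup_of_le h0 <| le_iSup_of_le hN le_rfl

lemma sum_abs_sub_rpow_le_toReal_var1D (hp : 0 ≤ p) (hx : var1D p x s t ≠ ⊤)
    (hf : Monotone f) (h0 : f 0 = s) (hN : f N = t) :
    ∑ i ∈ range N, |x (f (i + 1)) - x (f i)| ^ p ≤ (var1D p x s t).toReal := by
  have h := ENNReal.toReal_mono hx (sum_ofReal_abs_sub_rpow_le_var1D (x := x) (p := p) hf h0 hN)
  rwa [ENNReal.toReal_sum fun i _ => ENNReal.rpow_ne_top_of_nonneg hp ENNReal.ofReal_ne_top,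
    sum_congr rfl fun i _ => by
      rw [← ENNReal.toReal_rpow, ENNReal.toReal_ofReal (abs_nonneg _)]] at h

end Variation

lemma exists_mul_le_card_rpow_neg_mul {ι : Type*} {s : Finset ι} (hs : s.Nonempty)
    {p q A B : ℝ} (hp : 0 < p) (hq : 0 < q) {a b : ι → ℝ}
    (ha : ∀ i ∈ s, 0 ≤ a i) (hb : ∀ i ∈ s, 0 ≤ b i)
    (hA : ∑ i ∈ s, a i ^ p ≤ A) (hB : ∑ i ∈ s, b i ^ q ≤ B) :
    ∃ j ∈ s, a j * b j ≤ (#s : ℝ) ^ (-(1 / p + 1 / q)) * (A ^ (1 / p) * B ^ (1 / q)) := by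
  set θ := 1 / p + 1 / q
  have hθ : 0 < θ := by positivity
  set r := (p⁻¹ + q⁻¹)⁻¹
  have hrθ : r * θ = 1 := by simp only [r, θ, one_div]; exact inv_mul_cancel₀ (by positivity)
  have hA0 : 0 ≤ A := (sum_nonneg fun i hi => Real.rpow_nonneg (ha i hi) p).trans hA
  have hB0 : 0 ≤ B := (sum_nonneg fun i hi => Real.rpow_nonneg (hb i hi) q).trans hB
  have hcard : (0 : ℝ) < #s := by exact_mod_cast hs.card_pos
  have holder : ∑ i ∈ s, (a i * b i) ^ r ≤ A ^ (r / p) * B ^ (r / q) :=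
    (Real.Lr_rpow_le_Lp_mul_Lq_of_nonneg s (.of_pos hp hq) ha hb).trans <| by
      have hr : 0 ≤ r := by positivity
      have hsa : 0 ≤ ∑ i ∈ s, a i ^ p := sum_nonneg fun i hi => Real.rpow_nonneg (ha i hi) p
      have hsb : 0 ≤ ∑ i ∈ s, b i ^ q := sum_nonneg fun i hi => Real.rpow_nonneg (hb i hi) q
      gcongr
  obtain ⟨j, hj, hjC⟩ : ∃ j ∈ s, (a j * b j) ^ r ≤ A ^ (r / p) * B ^ (r / q) / #s :=
    exists_le_of_sum_le hs <| holder.trans_eq <| by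
      rw [sum_const, nsmul_eq_mul, mul_div_cancel₀ _ hcard.ne']
  refine ⟨j, hj, ?_⟩
  have hab : 0 ≤ a j * b j := mul_nonneg (ha j hj) (hb j hj)
  have hexp (u : ℝ) : r / u * θ = 1 / u := by rw [div_mul_eq_mul_div, hrθ]
  calc a j * b j = ((a j * b j) ^ r) ^ θ := by rw [← Real.rpow_mul hab, hrθ, Real.rpow_one]
    _ ≤ (A ^ (r / p) * B ^ (r / q) / #s) ^ θ := by gcongr
    _ = (#s : ℝ) ^ (-θ) * (A ^ (1 / p) * B ^ (1 / q)) := by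
      rw [Real.div_rpow (by positivity) hcard.le, Real.mul_rpow (by positivity) (by positivity),
        ← Real.rpow_mul hA0, ← Real.rpow_mul hB0, hexp, hexp, Real.rpow_neg hcard.le,
        div_eq_inv_mul]

lemma sum_range_rpow_neg_le_zetaSum {θ : ℝ} (hθ : 1 < θ) (N : ℕ) :
    ∑ k ∈ range N, ((k : ℝ) + 1) ^ (-θ) ≤ zetaSum θ := by
  have hsum : Summable fun k : ℕ => ((k : ℝ) + 1) ^ (-θ) := by
    simpa using (summable_nat_add_iff 1).2 (Real.summable_nat_rpow.2 (by linarith))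
  exact hsum.sum_le_tsum _ fun k _ => by positivity

section Removal

variable {p q s t : ℝ} {x y : ℝ → ℝ} {f : ℕ → ℝ}

lemma abs_stieltjesSum_one_le (hp : 0 < p) (hq : 0 < q) (hx : var1D p x s t ≠ ⊤)
    (hy : var1D q y s t ≠ ⊤) (hys : y s = 0) (hf : Monotone f) (h0 : f 0 = s) (h1 : f 1 = t) :
    |stieltjesSum y x f 1| ≤
      (var1D p x s t).toReal ^ (1 / p) * (var1D q y s t).toReal ^ (1 / q) := by
  obtain ⟨j, hj, h⟩ := exists_mul_le_card_rpow_neg_mul (s := range 1) ⟨0, by simp⟩ hp hq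
    (fun _ _ => abs_nonneg _) (fun _ _ => abs_nonneg _)
    (sum_abs_sub_rpow_le_toReal_var1D hp.le hx hf h0 h1)
    (sum_abs_sub_rpow_le_toReal_var1D hq.le hy hf h0 h1)
  obtain rfl : j = 0 := by simpa using hj
  rw [card_range, Nat.cast_one, Real.one_rpow, one_mul] at h
  calc |stieltjesSum y x f 1| = |x (f 1) - x (f 0)| * |y (f 1) - y (f 0)| := by
        rw [stieltjesSum, sum_range_one, abs_mul, mul_comm, h0, hys, sub_zero]
    _ ≤ _ := h

lemma exists_abs_stieltjesSum_le_comp_skipIndex (hp : 0 < p) (hq : 0 < q)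
    (hx : var1D p x s t ≠ ⊤) (hy : var1D q y s t ≠ ⊤) (hf : Monotone f) (h0 : f 0 = s)
    {N : ℕ} (hN : f (N + 2) = t) :
    ∃ j ≤ N, |stieltjesSum y x f (N + 2)| ≤ |stieltjesSum y x (f ∘ skipIndex j) (N + 1)|
      + ((N : ℝ) + 1) ^ (-(1 / p + 1 / q)) *
        ((var1D p x s t).toReal ^ (1 / p) * (var1D q y s t).toReal ^ (1 / q)) := by
  have hA : ∑ i ∈ range (N + 1), |x (f (i + 1)) - x (f i)| ^ p ≤ (var1D p x s t).toReal :=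
    (sum_le_sum_of_subset_of_nonneg (range_subset_range.2 (by omega : N + 1 ≤ N + 2))
      fun _ _ _ => by positivity).trans (sum_abs_sub_rpow_le_toReal_var1D hp.le hx hf h0 hN)
  have hB : ∑ i ∈ range (N + 1), |y (f (i + 1 + 1)) - y (f (i + 1))| ^ q ≤
      (var1D q y s t).toReal :=
    (le_add_of_nonneg_right (by positivity)).trans ((sum_range_succ' _ _).symm.trans_le
      (sum_abs_sub_rpow_le_toReal_var1D hq.le hy hf h0 hN))
  obtain ⟨j, hj, hjXY⟩ := exists_mul_le_card_rpow_neg_mul ⟨0, by simp⟩ hp hq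
    (fun _ _ => abs_nonneg _) (fun _ _ => abs_nonneg _) hA hB
  refine ⟨j, Nat.lt_succ_iff.1 (mem_range.1 hj), ?_⟩
  rw [stieltjesSum_eq_comp_skipIndex_add y x f (mem_range.1 hj)]
  refine (abs_add_le _ _).trans (add_le_add_right ?_ _)
  rw [abs_mul, abs_sub_comm (y _), mul_comm]
  simpa only [card_range, Nat.cast_add, Nat.cast_one] using hjXY

theorem abs_stieltjesSum_le (hp : 0 < p) (hq : 0 < q) (hx : var1D p x s t ≠ ⊤)
    (hy : var1D q y s t ≠ ⊤) (hys : y s = 0) {N : ℕ} (hf : Monotone f) (h0 : f 0 = s)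
    (hN : f N = t) :
    |stieltjesSum y x f N| ≤ (1 + ∑ k ∈ range (N - 1), ((k : ℝ) + 1) ^ (-(1 / p + 1 / q))) *
      ((var1D p x s t).toReal ^ (1 / p) * (var1D q y s t).toReal ^ (1 / q)) := by
  induction N generalizing f with
  | zero => simp only [stieltjesSum, range_zero, sum_empty, abs_zero]; positivity
  | succ N ih =>
    cases N with
    | zero => simpa using abs_stieltjesSum_one_le hp hq hx hy hys hf h0 hN
    | succ N =>
      obtain ⟨j, hjN, hj⟩ := exists_abs_stieltjesSum_le_comp_skipIndex hp hq hx hy hf h0 hN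
      have hgN : (f ∘ skipIndex j) (N + 1) = t := by
        simp only [Function.comp_apply, skipIndex, if_neg (by omega : ¬N + 1 ≤ j), hN]
      have hg0 : (f ∘ skipIndex j) 0 = s := by
        simp only [Function.comp_apply, skipIndex, if_pos j.zero_le, h0]
      refine hj.trans ((add_le_add_left
        (ih (hf.comp (monotone_skipIndex j)) hg0 hgN) _).trans_eq ?_)
      rw [Nat.add_sub_cancel, Nat.add_sub_cancel, sum_range_succ]
      ring

end Removal

theorem young_maximal_inequality_general (p q T : ℝ) (hp : 1 ≤ p) (hq : 1 ≤ q)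
    (hθ : 1 < 1 / p + 1 / q) (x y : ℝ → ℝ)
    (hx : var1D p x 0 T ≠ ⊤) (hy : var1D q y 0 T ≠ ⊤) (hy0 : y 0 = 0)
    (n : ℕ) (t : Fin (n + 1) → ℝ) (ht : Monotone t)
    (h0 : t 0 = 0) (hlast : t (Fin.last n) = T) :
    ENNReal.ofReal |discInt n t y x| ≤
      ENNReal.ofReal (1 + zetaSum (1 / p + 1 / q)) *
        var1D p x 0 T ^ (1 / p) * var1D q y 0 T ^ (1 / q) := by
  have hp0 : 0 < p := by linarith
  have hq0 : 0 < q := by linarith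
  have hζ : 0 ≤ zetaSum (1 / p + 1 / q) := by simpa using sum_range_rpow_neg_le_zetaSum hθ 0
  have hbound : |discInt n t y x| ≤ (1 + zetaSum (1 / p + 1 / q)) *
      ((var1D p x 0 T).toReal ^ (1 / p) * (var1D q y 0 T).toReal ^ (1 / q)) := by
    rw [discInt_eq_stieltjesSum]
    refine (abs_stieltjesSum_le hp0 hq0 hx hy hy0 (ht.comp Fin.clamp_monotone) ?_ ?_).trans ?_
    · simpa [Fin.clamp] using h0
    · rwa [Function.comp_apply, Fin.clamp_eq_last n n le_rfl]
    · gcongr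
      exact sum_range_rpow_neg_le_zetaSum hθ _
  have hofReal {a : ℝ≥0∞} (ha : a ≠ ⊤) {r : ℝ} (hr : 0 ≤ r) :
      ENNReal.ofReal (a.toReal ^ r) = a ^ r := by
    rw [ENNReal.toReal_rpow, ENNReal.ofReal_toReal (ENNReal.rpow_ne_top_of_nonneg hr ha)]
  rw [mul_assoc, ← hofReal hx (by positivity), ← hofReal hy (by positivity),
    ← ENNReal.ofReal_mul (by positivity), ← ENNReal.ofReal_mul (by linarith)]
  exact ENNReal.ofReal_le_ofReal hbound

/-- Young's maximal inequality, discrete form: for `θ = 1/p + 1/q > 1`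
and `y_0 = 0`, every discrete integral over a dissection of `[0,T]` satisfies
`|∫_D y dx| ≤ (1 + ζ(θ)) |x|_{p-var} |y|_{q-var}`. -/
theorem young_maximal_inequality (p q T : ℝ) (hp : 1 ≤ p) (hq : 1 ≤ q)
    (hθ : 1 < 1 / p + 1 / q) (hT : 0 < T) (x y : ℝ → ℝ)
    (hx : var1D p x 0 T ≠ ⊤) (hy : var1D q y 0 T ≠ ⊤) (hy0 : y 0 = 0)
    (n : ℕ) (t : Fin (n + 1) → ℝ) (ht : Monotone t)
    (h0 : t 0 = 0) (hlast : t (Fin.last n) = T) :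
    ENNReal.ofReal |discInt n t y x| ≤
      ENNReal.ofReal (1 + zetaSum (1 / p + 1 / q)) *
        var1D p x 0 T ^ (1 / p) * var1D q y 0 T ^ (1 / q) :=
  young_maximal_inequality_general p q T hp hq hθ x y hx hy hy0 n t ht h0 hlast
end

section
/- Let p, q ≥ 1 with θ = 1/p + 1/q > 1 and x, y : [0,T]^2 → ℝ of finite grid p- resp. q-variation with y(·,0) = 0. For dissections D = (t_i)_{i=0}^n (n ≥ 2) and D' of [0,T] and any α ∈ (1,θ), there exists i_0 ∈ {1,...,n−1} such that |∫_{D×D'} y dx − ∫_{(D∖{t_{i_0}})×D'} y dx| ≤ (n−1)^{−α}(1+ζ(θ/α))^α V_p(x;[0,T]^2) V_q(y;[0,T]^2). -/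
open Set
open scoped ENNReal NNReal

/-- The discrete 2D integral
`∫_{D×D'} y dx = Σ_i Σ_j y(t_i, s_j) x([t_{i-1},t_i]×[s_{j-1},s_j])`. -/
noncomputable def discInt2D (n m : ℕ) (t : Fin (n + 1) → ℝ) (s : Fin (m + 1) → ℝ)
    (y x : ℝ × ℝ → ℝ) : ℝ :=
  ∑ i : Fin n, ∑ j : Fin m,
    y (t i.succ, s j.succ) *
      Rect.inc x ⟨t i.castSucc, t i.succ, s j.castSucc, s j.succ⟩

/-!
Removing the interior point `t_{c+1}` of `D` changes `∫_{D×D'} y dx` by minus the one-dimensional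
Young sum along `D'` of the column path `e ↦ y(t_{c+2}, e) - y(t_{c+1}, e)` against the column path
`e ↦ x(t_{c+1}, e) - x(t_c, e)`. So it suffices to bound `∑_c |Young sum_c|^{1/α}`: the smallest
term is at most the mean.

For that, remove the points of `D'` one at a time. Removing `s_{j+1}` changes the `c`-th Young sum
by the product `δ_{c,j}` of a `y`-increment over `[s_{j+1}, s_{j+2}]` and an `x`-increment over
`[s_j, s_{j+1}]`. Hölder's inequality for the exponents `p`, `q` and `1/θ` gives
`∑_j (∑_c |δ_{c,j}|^{1/α})^{α/θ} ≤ (V_p^{1/p} V_q^{1/q})^{1/θ}`, so if `D'` has `N` interior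
points, some `j` has `∑_c |δ_{c,j}|^{1/α} ≤ N^{-θ/α} (V_p^{1/p} V_q^{1/q})^{1/α}`. Since `1/α ≤ 1`,
`|·|^{1/α}` is subadditive, and summing over `N` produces the factor `1 + ζ(θ/α)`.
-/

open Finset

namespace ENNReal

variable {κ : Type*}

theorem Lr_rpow_le_Lp_mul_Lq (S : Finset κ) (f g : κ → ℝ≥0∞) {p q r : ℝ}
    (hpqr : p.HolderTriple q r) :
    ∑ i ∈ S, (f i * g i) ^ r ≤ (∑ i ∈ S, f i ^ p) ^ (r / p) * (∑ i ∈ S, g i ^ q) ^ (r / q) := by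
  have hr : 0 < r := hpqr.pos'
  simpa [mul_rpow_of_nonneg _ _ hr.le, ← rpow_mul, ← mul_div_assoc, hr.ne', hpqr.pos.ne',
    hpqr.symm.pos.ne', fieldEq] using
    inner_le_Lp_mul_Lq S (fun i ↦ f i ^ r) (fun i ↦ g i ^ r) hpqr.holderConjugate_div_div

theorem rpow_sum_le_sum_rpow (S : Finset κ) (f : κ → ℝ≥0∞) {γ : ℝ} (h0 : 0 < γ) (h1 : γ ≤ 1) :
    (∑ i ∈ S, f i) ^ γ ≤ ∑ i ∈ S, f i ^ γ := by
  induction S using Finset.cons_induction with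
  | empty => simp [zero_rpow_of_pos h0]
  | cons a S ha ih =>
    rw [sum_cons, sum_cons]
    exact (rpow_add_le_add_rpow _ _ h0.le h1).trans (add_le_add_right ih _)

theorem sum_rpow_le_rpow_sum (S : Finset κ) (f : κ → ℝ≥0∞) {w : ℝ} (hw : 1 ≤ w) :
    ∑ i ∈ S, f i ^ w ≤ (∑ i ∈ S, f i) ^ w := by
  induction S using Finset.cons_induction with
  | empty => simp [zero_rpow_of_pos (zero_lt_one.trans_le hw)]
  | cons a S ha ih =>
    rw [sum_cons, sum_cons]
    exact (add_le_add_right ih _).trans (add_rpow_le_rpow_add _ _ hw)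

theorem exists_le_inv_card_mul_sum [Fintype κ] [Nonempty κ] (f : κ → ℝ≥0∞) :
    ∃ c, f c ≤ (Fintype.card κ : ℝ≥0∞)⁻¹ * ∑ i, f i := by
  obtain ⟨c, -, hc⟩ := univ.exists_min_image f univ_nonempty
  refine ⟨c, (mul_le_iff_le_inv (by simp) (by simp)).1 ?_⟩
  simpa using card_nsmul_le_sum univ f (f c) fun i _ => hc i (mem_univ i)

theorem ofReal_abs_add_rpow_le {γ : ℝ} (h0 : 0 < γ) (h1 : γ ≤ 1) (u v : ℝ) :
    ENNReal.ofReal |u + v| ^ γ ≤ ENNReal.ofReal |u| ^ γ + ENNReal.ofReal |v| ^ γ := by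
  calc ENNReal.ofReal |u + v| ^ γ ≤ (ENNReal.ofReal |u| + ENNReal.ofReal |v|) ^ γ := by
        rw [← ofReal_add (abs_nonneg u) (abs_nonneg v)]
        gcongr
        exact abs_add_le u v
    _ ≤ _ := rpow_add_le_add_rpow _ _ h0.le h1

theorem ofReal_zetaSum {β : ℝ} (hβ : 1 < β) :
    ENNReal.ofReal (zetaSum β) = ∑' r : ℕ, ((r : ℝ≥0∞) + 1)⁻¹ ^ β := by
  have hsum : Summable fun r : ℕ => ((r : ℝ) + 1) ^ (-β) := by
    simpa using (summable_nat_add_iff 1).2 (Real.summable_nat_rpow.2 (neg_lt_neg hβ))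
  rw [zetaSum, ofReal_tsum_of_nonneg (fun r => by positivity) hsum]
  congr 1 with r
  rw [← ofReal_natCast, ← ofReal_one, ← ofReal_add (by positivity) zero_le_one,
    inv_rpow, ← rpow_neg, ofReal_rpow_of_pos (by positivity)]

theorem sum_mul_rpow_le_s15 (S : Finset κ) {f g : κ → ℝ≥0∞} {p q θ α : ℝ}
    {P Q : ℝ≥0∞} (hp : 0 < p) (hq : 0 < q) (hθ : 1 / p + 1 / q = θ) (hα : 0 < α) (hαθ : α ≤ θ)
    (hf : ∑ i ∈ S, f i ^ p ≤ P) (hg : ∑ i ∈ S, g i ^ q ≤ Q) :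
    ∑ i ∈ S, (f i * g i) ^ (1 / α) ≤ (P ^ (1 / p) * Q ^ (1 / q)) ^ (1 / α) := by
  have hθ0 : 0 < θ := hα.trans_le hαθ
  have hpqr : p.HolderTriple q (1 / θ) := ⟨by rw [← hθ]; simp, hp, hq⟩
  calc ∑ i ∈ S, (f i * g i) ^ (1 / α) = ∑ i ∈ S, ((f i * g i) ^ (1 / θ)) ^ (θ / α) := by
        simp only [← rpow_mul]
        field_simp
    _ ≤ (∑ i ∈ S, (f i * g i) ^ (1 / θ)) ^ (θ / α) :=
        sum_rpow_le_rpow_sum S _ ((one_le_div hα).2 hαθ)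
    _ ≤ ((∑ i ∈ S, f i ^ p) ^ (1 / θ / p) * (∑ i ∈ S, g i ^ q) ^ (1 / θ / q)) ^ (θ / α) := by
        gcongr
        exact Lr_rpow_le_Lp_mul_Lq S f g hpqr
    _ ≤ (P ^ (1 / θ / p) * Q ^ (1 / θ / q)) ^ (θ / α) := by gcongr
    _ = (P ^ (1 / p) * Q ^ (1 / q)) ^ (1 / α) := by
        rw [mul_rpow_of_nonneg _ _ (by positivity),
          mul_rpow_of_nonneg _ _ (by positivity), ← rpow_mul, ← rpow_mul,
          ← rpow_mul, ← rpow_mul]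
        congr 2 <;> field_simp

end ENNReal

theorem sum_consecutive_sub_sum_succAbove {α M : Type*} [AddCommGroup M] {n : ℕ}
    (u : Fin (n + 3) → α) (F : α → α → M) (c : Fin (n + 1)) :
    ∑ i : Fin (n + 2), F (u i.castSucc) (u i.succ) -
      ∑ i : Fin (n + 1), F (u (c.succ.castSucc.succAbove i.castSucc))
        (u (c.succ.castSucc.succAbove i.succ)) =
    F (u c.castSucc.castSucc) (u c.succ.castSucc) + F (u c.succ.castSucc) (u c.succ.succ) -
      F (u c.castSucc.castSucc) (u c.succ.succ) := by
  have hsucc : ∀ i ≠ c, c.succ.castSucc.succAbove i.succ = (c.succ.succAbove i).succ := by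
    intro i hi
    rcases lt_or_gt_of_ne hi with h | h
    · rw [Fin.succAbove_of_castSucc_lt, Fin.succAbove_of_castSucc_lt, Fin.succ_castSucc] <;>
        simp only [Fin.lt_def, Fin.val_castSucc, Fin.val_succ] at h ⊢ <;> omega
    · rw [Fin.succAbove_of_le_castSucc, Fin.succAbove_of_le_castSucc] <;>
        simp only [Fin.le_def, Fin.lt_def, Fin.val_castSucc,
          Fin.val_succ] at h ⊢ <;> omega
  have hrest : ∑ i : Fin (n + 1), F (u (c.succ.succAbove i).castSucc) (u (c.succ.succAbove i).succ)
      - ∑ i : Fin (n + 1), F (u (c.succ.castSucc.succAbove i.castSucc))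
        (u (c.succ.castSucc.succAbove i.succ)) =
      F (u c.castSucc.castSucc) (u c.succ.castSucc) -
        F (u c.castSucc.castSucc) (u c.succ.succ) := by
    rw [← sum_sub_distrib, sum_eq_single c (fun i _ hi => by
      rw [← Fin.castSucc_succAbove_castSucc, hsucc i hi, sub_self]) (by simp)]
    simp
  rw [Fin.sum_univ_succAbove _ c.succ, add_sub_assoc, hrest]
  abel

def IsDissection {k : ℕ} (s : Fin (k + 1) → ℝ) (a b : ℝ) : Prop :=
  Monotone s ∧ s 0 = a ∧ s (Fin.last k) = b

theorem IsDissection.succAbove {n : ℕ} {s : Fin (n + 3) → ℝ} {a b : ℝ}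
    (hs : IsDissection s a b) (c : Fin (n + 1)) :
    IsDissection (fun j => s (c.succ.castSucc.succAbove j)) a b := by
  obtain ⟨hmono, h0, hlast⟩ := hs
  refine ⟨hmono.comp (Fin.strictMono_succAbove _).monotone, ?_, ?_⟩
  · simpa [Fin.succAbove_ne_zero_zero (Fin.castSucc_ne_zero_iff.mpr c.succ_ne_zero)] using h0
  · simpa [Fin.succAbove_ne_last_last (Fin.castSucc_lt_last c.succ).ne] using hlast

def youngSum {k : ℕ} (s : Fin (k + 1) → ℝ) (Y X : ℝ → ℝ) : ℝ :=
  ∑ j : Fin k, (Y (s j.succ) - Y (s 0)) * (X (s j.succ) - X (s j.castSucc))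

theorem youngSum_sub_succAbove {n : ℕ} (s : Fin (n + 3) → ℝ) (Y X : ℝ → ℝ) (c : Fin (n + 1)) :
    youngSum s Y X - youngSum (fun j => s (c.succ.castSucc.succAbove j)) Y X =
      -((Y (s c.succ.succ) - Y (s c.succ.castSucc)) *
        (X (s c.succ.castSucc) - X (s c.castSucc.castSucc))) := by
  have h0 : c.succ.castSucc.succAbove 0 = 0 :=
    Fin.succAbove_ne_zero_zero (Fin.castSucc_ne_zero_iff.mpr c.succ_ne_zero)
  simp only [youngSum, h0]
  rw [sum_consecutive_sub_sum_succAbove s (fun e e' => (Y e' - Y (s 0)) * (X e' - X e)) c]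
  ring

section YoungEstimate

variable {ι : Type*} [Fintype ι]

noncomputable def famIncSum (p : ℝ) (X : ι → ℝ → ℝ) {k : ℕ} (s : Fin (k + 1) → ℝ) : ℝ≥0∞ :=
  ∑ i, ∑ j : Fin k, ENNReal.ofReal |X i (s j.succ) - X i (s j.castSucc)| ^ p

/-- The dissection is shared by the whole family: this is the `p`-th power of the `p`-variation
of `X` viewed as an `ℓ^p(ι)`-valued path. -/
noncomputable def famVarSum (p : ℝ) (X : ι → ℝ → ℝ) (a b : ℝ) : ℝ≥0∞ :=
  ⨆ (k : ℕ) (s : Fin (k + 1) → ℝ) (_ : IsDissection s a b), famIncSum p X s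

theorem famIncSum_le_famVarSum {p a b : ℝ} (X : ι → ℝ → ℝ) {k : ℕ} {s : Fin (k + 1) → ℝ}
    (hs : IsDissection s a b) : famIncSum p X s ≤ famVarSum p X a b :=
  le_iSup₂_of_le k s (le_iSup_of_le hs le_rfl)

variable {p q θ α a b : ℝ}

theorem sum_youngSum_rpow_le_of_two_points (hp : 0 < p) (hq : 0 < q) (hθ : 1 / p + 1 / q = θ)
    (hα : 0 < α) (hαθ : α ≤ θ) (X Y : ι → ℝ → ℝ) {s : Fin 2 → ℝ} (hs : IsDissection s a b) :
    ∑ i, ENNReal.ofReal |youngSum s (Y i) (X i)| ^ (1 / α) ≤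
      (famVarSum p X a b ^ (1 / p) * famVarSum q Y a b ^ (1 / q)) ^ (1 / α) := by
  have hsum : ∀ (r : ℝ) (Z : ι → ℝ → ℝ),
      ∑ i, ENNReal.ofReal |Z i (s 1) - Z i (s 0)| ^ r = famIncSum r Z s := by
    intro r Z
    simp [famIncSum]
  calc ∑ i, ENNReal.ofReal |youngSum s (Y i) (X i)| ^ (1 / α)
      = ∑ i, (ENNReal.ofReal |X i (s 1) - X i (s 0)| *
          ENNReal.ofReal |Y i (s 1) - Y i (s 0)|) ^ (1 / α) := by
        simp [youngSum, abs_mul, ENNReal.ofReal_mul, mul_comm]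
    _ ≤ _ := ENNReal.sum_mul_rpow_le_s15 _ hp hq hθ hα hαθ
        ((hsum p X).trans_le (famIncSum_le_famVarSum X hs))
        ((hsum q Y).trans_le (famIncSum_le_famVarSum Y hs))

theorem exists_sum_abs_mul_rpow_le (hp : 0 < p) (hq : 0 < q) (hθ : 1 / p + 1 / q = θ)
    (hα : 0 < α) (hαθ : α ≤ θ) (X Y : ι → ℝ → ℝ) {n : ℕ} {s : Fin (n + 3) → ℝ}
    (hs : IsDissection s a b) :
    ∃ c : Fin (n + 1), ∑ i, ENNReal.ofReal |(Y i (s c.succ.succ) - Y i (s c.succ.castSucc)) *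
        (X i (s c.succ.castSucc) - X i (s c.castSucc.castSucc))| ^ (1 / α) ≤
      ((n : ℝ≥0∞) + 1)⁻¹ ^ (θ / α) *
        (famVarSum p X a b ^ (1 / p) * famVarSum q Y a b ^ (1 / q)) ^ (1 / α) := by
  set V := famVarSum p X a b ^ (1 / p) * famVarSum q Y a b ^ (1 / q)
  have hθ0 : 0 < θ := hα.trans_le hαθ
  set f : Fin (n + 1) × ι → ℝ≥0∞ := fun z =>
    ENNReal.ofReal |X z.2 (s z.1.succ.castSucc) - X z.2 (s z.1.castSucc.castSucc)|
  set g : Fin (n + 1) × ι → ℝ≥0∞ := fun z =>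
    ENNReal.ofReal |Y z.2 (s z.1.succ.succ) - Y z.2 (s z.1.succ.castSucc)|
  set D : Fin (n + 1) → ℝ≥0∞ := fun c => ∑ i, (f (c, i) * g (c, i)) ^ (1 / α)
  have hD : ∀ c, D c ^ (α / θ) ≤ ∑ i, (f (c, i) * g (c, i)) ^ (1 / θ) := fun c =>
    (ENNReal.rpow_sum_le_sum_rpow _ _ (by positivity) ((div_le_one hθ0).2 hαθ)).trans_eq
      (sum_congr rfl fun i _ => by rw [← ENNReal.rpow_mul]; field_simp)
  have hf : ∑ z, f z ^ p ≤ famVarSum p X a b := by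
    refine le_trans ?_ (famIncSum_le_famVarSum X hs)
    rw [Fintype.sum_prod_type, sum_comm, famIncSum]
    gcongr with i
    conv_rhs => rw [Fin.sum_univ_castSucc]
    simp only [f, Fin.succ_castSucc]
    exact le_self_add
  have hg : ∑ z, g z ^ q ≤ famVarSum q Y a b := by
    refine le_trans ?_ (famIncSum_le_famVarSum Y hs)
    rw [Fintype.sum_prod_type, sum_comm, famIncSum]
    gcongr with i
    conv_rhs => rw [Fin.sum_univ_succ]
    exact le_add_self
  have htotal : ∑ c, D c ^ (α / θ) ≤ V ^ (1 / θ) := by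
    refine (sum_le_sum fun c _ => hD c).trans ?_
    rw [← Fintype.sum_prod_type']
    exact ENNReal.sum_mul_rpow_le_s15 univ hp hq hθ hθ0 le_rfl hf hg
  obtain ⟨c, hc⟩ := ENNReal.exists_le_inv_card_mul_sum fun c => D c ^ (α / θ)
  refine ⟨c, ?_⟩
  calc _ = D c := sum_congr rfl fun i _ => by
          simp only [f, g, abs_mul, ENNReal.ofReal_mul (abs_nonneg _), mul_comm]
    _ ≤ (((n : ℝ≥0∞) + 1)⁻¹ * V ^ (1 / θ)) ^ (θ / α) := by
        rw [← ENNReal.rpow_inv_le_iff (by positivity), inv_div]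
        refine hc.trans ?_
        rw [Fintype.card_fin, Nat.cast_succ]
        gcongr
    _ = ((n : ℝ≥0∞) + 1)⁻¹ ^ (θ / α) * V ^ (1 / α) := by
        rw [ENNReal.mul_rpow_of_nonneg _ _ (by positivity), ← ENNReal.rpow_mul]
        field_simp

theorem sum_abs_youngSum_rpow_le (hp : 0 < p) (hq : 0 < q) (hθ : 1 / p + 1 / q = θ)
    (hα : 1 ≤ α) (hαθ : α ≤ θ) (X Y : ι → ℝ → ℝ) {k : ℕ} {s : Fin (k + 1) → ℝ}
    (hs : IsDissection s a b) :
    ∑ i, ENNReal.ofReal |youngSum s (Y i) (X i)| ^ (1 / α) ≤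
      (1 + ∑ r ∈ range (k - 1), ((r : ℝ≥0∞) + 1)⁻¹ ^ (θ / α)) *
        (famVarSum p X a b ^ (1 / p) * famVarSum q Y a b ^ (1 / q)) ^ (1 / α) := by
  have hα0 : 0 < α := zero_lt_one.trans_le hα
  induction k with
  | zero => simp [youngSum, ENNReal.zero_rpow_of_pos (inv_pos.2 hα0)]
  | succ k ih =>
    cases k with
    | zero =>
      exact (sum_youngSum_rpow_le_of_two_points hp hq hθ hα0 hαθ X Y hs).trans
        (le_mul_of_one_le_left zero_le le_self_add)
    | succ n =>
      obtain ⟨c, hc⟩ := exists_sum_abs_mul_rpow_le hp hq hθ hα0 hαθ X Y hs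
      have hpoint : ∀ i, ENNReal.ofReal |youngSum s (Y i) (X i)| ^ (1 / α) ≤
          ENNReal.ofReal |youngSum (fun j => s (c.succ.castSucc.succAbove j)) (Y i) (X i)| ^
              (1 / α) +
          ENNReal.ofReal |(Y i (s c.succ.succ) - Y i (s c.succ.castSucc)) *
            (X i (s c.succ.castSucc) - X i (s c.castSucc.castSucc))| ^ (1 / α) := by
        intro i
        rw [← abs_neg (_ * _), eq_add_of_sub_eq' (youngSum_sub_succAbove s (Y i) (X i) c)]
        exact ENNReal.ofReal_abs_add_rpow_le (by positivity) (div_le_one_of_le₀ hα hα0.le) _ _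
      calc _ ≤ _ := (sum_le_sum fun i _ => hpoint i).trans_eq sum_add_distrib
        _ ≤ _ := add_le_add (ih (hs.succAbove c)) hc
        _ = _ := by
          simp only [Nat.add_sub_cancel, sum_range_succ]
          ring

theorem exists_abs_youngSum_le (hp : 0 < p) (hq : 0 < q) (hθ : 1 / p + 1 / q = θ)
    (hα : 1 ≤ α) (hαθ : α < θ) {m : ℕ} (X Y : Fin (m + 1) → ℝ → ℝ) {k : ℕ}
    {s : Fin (k + 1) → ℝ} (hs : IsDissection s a b) :
    ∃ c, ENNReal.ofReal |youngSum s (Y c) (X c)| ≤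
      ((m + 1 : ℝ≥0∞))⁻¹ ^ α * ENNReal.ofReal ((1 + zetaSum (θ / α)) ^ α) *
        famVarSum p X a b ^ (1 / p) * famVarSum q Y a b ^ (1 / q) := by
  have hα0 : 0 < α := zero_lt_one.trans_le hα
  have hζ0 : 0 ≤ zetaSum (θ / α) := tsum_nonneg fun r => by positivity
  have hζ : 1 + ∑ r ∈ range (k - 1), ((r : ℝ≥0∞) + 1)⁻¹ ^ (θ / α) ≤
      ENNReal.ofReal (1 + zetaSum (θ / α)) := by
    rw [ENNReal.ofReal_add zero_le_one hζ0, ENNReal.ofReal_one,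
      ENNReal.ofReal_zetaSum ((one_lt_div hα0).2 hαθ)]
    gcongr
    exact ENNReal.sum_le_tsum _
  obtain ⟨c, hc⟩ := ENNReal.exists_le_inv_card_mul_sum fun c =>
    ENNReal.ofReal |youngSum s (Y c) (X c)| ^ (1 / α)
  refine ⟨c, ?_⟩
  calc _ = (ENNReal.ofReal |youngSum s (Y c) (X c)| ^ (1 / α)) ^ α := by
        rw [← ENNReal.rpow_mul, one_div_mul_cancel hα0.ne', ENNReal.rpow_one]
    _ ≤ (((m + 1 : ℝ≥0∞))⁻¹ * (ENNReal.ofReal (1 + zetaSum (θ / α)) *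
          (famVarSum p X a b ^ (1 / p) * famVarSum q Y a b ^ (1 / q)) ^ (1 / α))) ^ α := by
        gcongr
        refine hc.trans ?_
        rw [Fintype.card_fin, Nat.cast_succ]
        gcongr
        exact (sum_abs_youngSum_rpow_le hp hq hθ hα hαθ.le X Y hs).trans (by gcongr)
    _ = _ := by
        simp only [ENNReal.mul_rpow_of_nonneg _ _ hα0.le, ← ENNReal.rpow_mul,
          one_div_mul_cancel hα0.ne', ENNReal.rpow_one,
          ENNReal.ofReal_rpow_of_nonneg (by positivity : 0 ≤ 1 + zetaSum (θ / α)) hα0.le]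
        ring

end YoungEstimate

def columnPath (f : ℝ × ℝ → ℝ) {n : ℕ} (t : Fin (n + 1) → ℝ) (i : Fin n) (e : ℝ) : ℝ :=
  f (t i.succ, e) - f (t i.castSucc, e)

theorem famIncSum_columnPath (p : ℝ) (f : ℝ × ℝ → ℝ) {n k : ℕ} (t : Fin (n + 1) → ℝ)
    (s : Fin (k + 1) → ℝ) :
    famIncSum p (columnPath f t) s = ∑ i : Fin n, ∑ j : Fin k,
      ENNReal.ofReal |Rect.inc f ⟨t i.castSucc, t i.succ, s j.castSucc, s j.succ⟩| ^ p := by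
  simp only [famIncSum, columnPath, Rect.inc]
  congr! 5
  ring

theorem famVarSum_columnPath_le (p : ℝ) (f : ℝ × ℝ → ℝ) {n : ℕ} {t : Fin (n + 1) → ℝ}
    {a b c d : ℝ} (ht : IsDissection t a b) :
    famVarSum p (columnPath f t) c d ≤ gridVarSum p f ⟨a, b, c, d⟩ := by
  obtain ⟨ht, ht0, htl⟩ := ht
  refine iSup₂_le fun k s => iSup_le fun ⟨hs, hs0, hsl⟩ => ?_
  rw [famIncSum_columnPath]
  exact le_iSup₂_of_le n k <| le_iSup₂_of_le t s <| le_iSup₂_of_le ht hs <|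
    le_iSup₂_of_le ht0 htl <| le_iSup₂_of_le hs0 hsl le_rfl

theorem famVarSum_comp_le {ι κ : Type*} [Fintype ι] [Fintype κ] (p : ℝ) (X : ι → ℝ → ℝ)
    {e : κ → ι} (he : Function.Injective e) (a b : ℝ) :
    famVarSum p (fun i => X (e i)) a b ≤ famVarSum p X a b := by
  refine iSup₂_mono fun k s => iSup_mono fun _ => ?_
  simpa [famIncSum, sum_map] using
    sum_le_sum_of_subset (f := fun i => ∑ j : Fin k,
      ENNReal.ofReal |X i (s j.succ) - X i (s j.castSucc)| ^ p) (subset_univ (univ.map ⟨e, he⟩))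

theorem discInt2D_sub_succAbove {x y : ℝ × ℝ → ℝ} (hy0 : ∀ r : ℝ, y (r, 0) = 0) {n k : ℕ}
    (t : Fin (n + 3) → ℝ) {s : Fin (k + 1) → ℝ} (hs0 : s 0 = 0) (c : Fin (n + 1)) :
    discInt2D (n + 2) k t s y x -
        discInt2D (n + 1) k (fun j => t (c.succ.castSucc.succAbove j)) s y x =
      -youngSum s (columnPath y t c.succ) (columnPath x t c.castSucc) := by
  have := sum_consecutive_sub_sum_succAbove t
    (fun e e' => ∑ j : Fin k, y (e', s j.succ) * Rect.inc x ⟨e, e', s j.castSucc, s j.succ⟩) c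
  rw [discInt2D, discInt2D, this]
  simp only [youngSum, columnPath, Rect.inc, hs0, hy0, Fin.succ_castSucc, ← sum_add_distrib,
    ← sum_sub_distrib, ← sum_neg_distrib]
  refine sum_congr rfl fun j _ => ?_
  ring

theorem young_towghi_point_removal_general (p q T α : ℝ) (hp : 1 ≤ p) (hq : 1 ≤ q)
    (hα : 1 < α) (hαθ : α < 1 / p + 1 / q)
    (x y : ℝ × ℝ → ℝ)
    (hy0 : ∀ r : ℝ, y (r, 0) = 0)
    (m k : ℕ) (t : Fin (m + 3) → ℝ) (s : Fin (k + 1) → ℝ)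
    (ht : StrictMono t) (hs : Monotone s)
    (ht0 : t 0 = 0) (htlast : t (Fin.last (m + 2)) = T)
    (hs0 : s 0 = 0) (hslast : s (Fin.last k) = T) :
    ∃ i₀ : Fin (m + 3), i₀ ≠ 0 ∧ i₀ ≠ Fin.last (m + 2) ∧
      ENNReal.ofReal
          |discInt2D (m + 2) k t s y x -
            discInt2D (m + 1) k (fun j => t (i₀.succAbove j)) s y x| ≤
        ((m + 1 : ℝ≥0∞))⁻¹ ^ α *
          ENNReal.ofReal ((1 + zetaSum ((1 / p + 1 / q) / α)) ^ α) *
          gridVarSum p x (Rect.mk 0 T 0 T) ^ (1 / p) *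
          gridVarSum q y (Rect.mk 0 T 0 T) ^ (1 / q) := by
  have htD : IsDissection t 0 T := ⟨ht.monotone, ht0, htlast⟩
  obtain ⟨c, hc⟩ := exists_abs_youngSum_le (zero_lt_one.trans_le hp) (zero_lt_one.trans_le hq)
    rfl hα.le hαθ (fun c => columnPath x t c.castSucc) (fun c => columnPath y t c.succ)
    (⟨hs, hs0, hslast⟩ : IsDissection s 0 T)
  refine ⟨c.succ.castSucc, Fin.castSucc_ne_zero_iff.mpr c.succ_ne_zero,
    (Fin.castSucc_lt_last _).ne, ?_⟩
  rw [discInt2D_sub_succAbove hy0 t hs0, abs_neg]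
  refine hc.trans ?_
  gcongr
  · exact (famVarSum_comp_le p _ (Fin.castSucc_injective _) 0 T).trans
      (famVarSum_columnPath_le p x htD)
  · exact (famVarSum_comp_le q _ (Fin.succ_injective _) 0 T).trans
      (famVarSum_columnPath_le q y htD)

/-- one-point removal estimate for discrete 2D Young–Towghi integrals.
For a dissection `D` of `[0,T]` with `n = m+2 ≥ 2` intervals and any dissection `D'`,
there is an interior point of `D` whose removal changes `∫_{D×D'} y dx` by at most
`(n-1)^{-α} (1+ζ(θ/α))^α V_p(x;[0,T]²) V_q(y;[0,T]²)`, for any `α ∈ (1,θ)`. -/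
theorem young_towghi_point_removal (p q T α : ℝ) (hp : 1 ≤ p) (hq : 1 ≤ q)
    (hθ : 1 < 1 / p + 1 / q) (hα : 1 < α) (hαθ : α < 1 / p + 1 / q) (hT : 0 < T)
    (x y : ℝ × ℝ → ℝ)
    (hx : gridVarSum p x (Rect.mk 0 T 0 T) ≠ ⊤)
    (hy : gridVarSum q y (Rect.mk 0 T 0 T) ≠ ⊤)
    (hy0 : ∀ r : ℝ, y (r, 0) = 0)
    (m k : ℕ) (t : Fin (m + 3) → ℝ) (s : Fin (k + 1) → ℝ)
    (ht : StrictMono t) (hs : Monotone s)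
    (ht0 : t 0 = 0) (htlast : t (Fin.last (m + 2)) = T)
    (hs0 : s 0 = 0) (hslast : s (Fin.last k) = T) :
    ∃ i₀ : Fin (m + 3), i₀ ≠ 0 ∧ i₀ ≠ Fin.last (m + 2) ∧
      ENNReal.ofReal
          |discInt2D (m + 2) k t s y x -
            discInt2D (m + 1) k (fun j => t (i₀.succAbove j)) s y x| ≤
        ((m + 1 : ℝ≥0∞))⁻¹ ^ α *
          ENNReal.ofReal ((1 + zetaSum ((1 / p + 1 / q) / α)) ^ α) *
          gridVarSum p x (Rect.mk 0 T 0 T) ^ (1 / p) *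
          gridVarSum q y (Rect.mk 0 T 0 T) ^ (1 / q) :=
  young_towghi_point_removal_general p q T α hp hq hα hαθ x y hy0 m k t s ht hs ht0 htlast hs0
    hslast
end

section
/- Super-additivity of controlled p-variation implies a one-sided monotone continuity ('inner continuity'): if f : [0,T]^2 → ℝ is continuous with finite controlled p-variation and ω(R) := |f|^p_{p-var;R}, then for every rectangle A = [a_1,a_2]×[a_3,a_4] with a_1 < a_2, a_3 < a_4, one has ω(A) = lim_{r↓0} ω([a_1+r, a_2−r]×[a_3+r, a_4−r]). -/
open Set
open scoped ENNReal NNReal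

open Filter Topology

/-!
Shrinking a rectangle can only decrease `ω`: cutting the outer rectangle four times isolates the
inner one as a piece of a partition, and any partition of that piece refines it.
Conversely, the homothety in each coordinate that maps `A` onto `A_r` carries a partition of `A`
to a partition of `A_r`, and as `r ↓ 0` the corners of the image pieces converge to the original
corners, so by continuity of `f` the corresponding sums converge. Hence every value below `ω(A)`
is eventually exceeded by `ω(A_r) ≤ ω(A)`.
-/

namespace Rect

lemma interior_toSet (R : Rect) : interior R.toSet = R.openSet := by
  rw [toSet, openSet, interior_prod_eq, interior_Icc, interior_Icc]

lemma openSet_subset_of_toSet_subset {Q R : Rect} (h : Q.toSet ⊆ R.toSet) :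
    Q.openSet ⊆ R.openSet := by
  rw [← interior_toSet, ← interior_toSet]
  exact interior_mono h

end Rect

namespace IsPartition

variable {R : Rect} {P : Finset Rect}

lemma subset (hP : IsPartition R P) {Q : Rect} (hQ : Q ∈ P) : Q.toSet ⊆ R.toSet :=
  hP.2.2 ▸ subset_biUnion_of_mem (u := Rect.toSet) hQ

lemma refine {S : Finset Rect} {R' : Rect} (hS : IsPartition R S) (hR' : R' ∈ S)
    (hP : IsPartition R' P) : IsPartition R (S.erase R' ∪ P) := by
  obtain ⟨hSval, hSdisj, hSuni⟩ := hS
  refine ⟨fun Q hQ => ?_, ?_, ?_⟩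
  · rcases Finset.mem_union.1 hQ with hQ | hQ
    exacts [hSval Q (Finset.mem_of_mem_erase hQ), hP.1 Q hQ]
  · have hcross : ∀ V ∈ S.erase R', ∀ Q ∈ P, Disjoint V.openSet Q.openSet := fun V hV Q hQ =>
      (hSdisj (Finset.mem_of_mem_erase hV) hR' (Finset.ne_of_mem_erase hV)).mono_right
        (Rect.openSet_subset_of_toSet_subset (hP.subset hQ))
    rw [Finset.coe_union]
    refine pairwise_union.2 ⟨hSdisj.mono (Finset.coe_subset.2 (Finset.erase_subset _ _)), hP.2.1,
      fun V hV Q hQ _ => ⟨hcross V hV Q hQ, (hcross V hV Q hQ).symm⟩⟩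
  · rw [Finset.set_biUnion_union, hP.2.2, union_comm, ← Finset.set_biUnion_insert,
      Finset.insert_erase hR', hSuni]

end IsPartition

lemma isPartition_split_fst {a m b c d : ℝ} (ham : a ≤ m) (hmb : m ≤ b) (hcd : c ≤ d) :
    IsPartition ⟨a, b, c, d⟩ {⟨a, m, c, d⟩, ⟨m, b, c, d⟩} := by
  have hdisj : Disjoint (Ioo a m) (Ioo m b) :=
    Ico_disjoint_Ico_same.mono Ioo_subset_Ico_self Ioo_subset_Ico_self
  refine ⟨by simp [Rect.Valid, *], ?_, ?_⟩
  · rw [Finset.coe_pair, pairwise_pair]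
    exact fun _ => ⟨disjoint_prod.2 (.inl hdisj), disjoint_prod.2 (.inl hdisj.symm)⟩
  · simp only [Finset.set_biUnion_insert, Finset.set_biUnion_singleton, Rect.toSet]
    rw [← union_prod, Icc_union_Icc_eq_Icc ham hmb]

lemma isPartition_split_snd {a b c m d : ℝ} (hab : a ≤ b) (hcm : c ≤ m) (hmd : m ≤ d) :
    IsPartition ⟨a, b, c, d⟩ {⟨a, b, c, m⟩, ⟨a, b, m, d⟩} := by
  have hdisj : Disjoint (Ioo c m) (Ioo m d) :=
    Ico_disjoint_Ico_same.mono Ioo_subset_Ico_self Ioo_subset_Ico_self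
  refine ⟨by simp [Rect.Valid, *], ?_, ?_⟩
  · rw [Finset.coe_pair, pairwise_pair]
    exact fun _ => ⟨disjoint_prod.2 (.inr hdisj), disjoint_prod.2 (.inr hdisj.symm)⟩
  · simp only [Finset.set_biUnion_insert, Finset.set_biUnion_singleton, Rect.toSet]
    rw [← prod_union, Icc_union_Icc_eq_Icc hcm hmd]

section cVarSum

variable {p : ℝ} {f : ℝ × ℝ → ℝ}

lemma sum_le_cVarSum {R : Rect} {P : Finset Rect} (hP : IsPartition R P) :
    ∑ Q ∈ P, ENNReal.ofReal |Rect.inc f Q| ^ p ≤ cVarSum p f R :=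
  le_iSup₂ (f := fun P (_ : IsPartition R P) => ∑ Q ∈ P, ENNReal.ofReal |Rect.inc f Q| ^ p) P hP

lemma cVarSum_le_of_mem {R R' : Rect} {S : Finset Rect} (hS : IsPartition R S) (hR' : R' ∈ S) :
    cVarSum p f R' ≤ cVarSum p f R :=
  iSup₂_le fun _ hP => (Finset.sum_le_sum_of_subset Finset.subset_union_right).trans
    (sum_le_cVarSum (hS.refine hR' hP))

lemma cVarSum_mono {a a' b' b c c' d' d : ℝ} (ha : a ≤ a') (hab : a' ≤ b') (hb : b' ≤ b)
    (hc : c ≤ c') (hcd : c' ≤ d') (hd : d' ≤ d) :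
    cVarSum p f ⟨a', b', c', d'⟩ ≤ cVarSum p f ⟨a, b, c, d⟩ :=
  calc cVarSum p f ⟨a', b', c', d'⟩
      ≤ cVarSum p f ⟨a', b, c', d'⟩ :=
        cVarSum_le_of_mem (isPartition_split_fst hab hb hcd) (by simp)
    _ ≤ cVarSum p f ⟨a, b, c', d'⟩ :=
        cVarSum_le_of_mem (isPartition_split_fst ha (hab.trans hb) hcd) (by simp)
    _ ≤ cVarSum p f ⟨a, b, c', d⟩ :=
        cVarSum_le_of_mem (isPartition_split_snd (ha.trans (hab.trans hb)) hcd hd) (by simp)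
    _ ≤ cVarSum p f ⟨a, b, c, d⟩ :=
        cVarSum_le_of_mem (isPartition_split_snd (ha.trans (hab.trans hb)) hc (hcd.trans hd))
          (by simp)

end cVarSum

namespace Rect

def map (g₁ g₂ : ℝ → ℝ) (Q : Rect) : Rect := ⟨g₁ Q.a, g₁ Q.b, g₂ Q.c, g₂ Q.d⟩

lemma map_injective {g₁ g₂ : ℝ → ℝ} (h₁ : Function.Injective g₁) (h₂ : Function.Injective g₂) :
    Function.Injective (map g₁ g₂) := by
  rintro ⟨a, b, c, d⟩ ⟨a', b', c', d'⟩ h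
  simp only [map, mk.injEq] at h ⊢
  exact ⟨h₁ h.1, h₁ h.2.1, h₂ h.2.2.1, h₂ h.2.2.2⟩

variable (e₁ e₂ : ℝ ≃o ℝ) (Q : Rect)

lemma toSet_map : (Q.map e₁ e₂).toSet = Prod.map e₁ e₂ '' Q.toSet := by
  rw [toSet, toSet, prodMap_image_prod, OrderIso.image_Icc, OrderIso.image_Icc]; rfl

lemma openSet_map : (Q.map e₁ e₂).openSet = Prod.map e₁ e₂ '' Q.openSet := by
  rw [openSet, openSet, prodMap_image_prod, OrderIso.image_Ioo, OrderIso.image_Ioo]; rfl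

lemma Valid.map {Q : Rect} (hQ : Q.Valid) : (Q.map e₁ e₂).Valid :=
  ⟨e₁.monotone hQ.1, e₂.monotone hQ.2⟩

end Rect

lemma IsPartition.map {R : Rect} {P : Finset Rect} (e₁ e₂ : ℝ ≃o ℝ) (hP : IsPartition R P) :
    IsPartition (R.map e₁ e₂) (P.image (Rect.map e₁ e₂)) := by
  obtain ⟨hval, hdisj, huni⟩ := hP
  have hinj : Function.Injective (Prod.map e₁ e₂) := e₁.injective.prodMap e₂.injective
  refine ⟨?_, ?_, ?_⟩
  · simp only [Finset.mem_image, forall_exists_index, and_imp, forall_apply_eq_imp_iff₂]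
    exact fun Q hQ => (hval Q hQ).map e₁ e₂
  · rw [Finset.coe_image, (Rect.map_injective e₁.injective e₂.injective).injOn.pairwise_image]
    refine hdisj.mono' fun Q Q' hQQ' => ?_
    simpa only [Function.onFun, Rect.openSet_map] using (disjoint_image_iff hinj).2 hQQ'
  · rw [Finset.set_biUnion_finset_image, Rect.toSet_map, ← huni, image_iUnion₂]
    simp only [Rect.toSet_map]

lemma sum_le_cVarSum_map {p : ℝ} {f : ℝ × ℝ → ℝ} {R : Rect} {P : Finset Rect} (e₁ e₂ : ℝ ≃o ℝ)
    (hP : IsPartition R P) :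
    ∑ Q ∈ P, ENNReal.ofReal |Rect.inc f (Q.map e₁ e₂)| ^ p ≤ cVarSum p f (R.map e₁ e₂) := by
  rw [← Finset.sum_image (f := fun Q => ENNReal.ofReal |Rect.inc f Q| ^ p)
    (Rect.map_injective e₁.injective e₂.injective).injOn]
  exact sum_le_cVarSum (hP.map e₁ e₂)

lemma eventually_two_mul_lt {ε : ℝ} (hε : 0 < ε) : ∀ᶠ r in 𝓝[>] (0 : ℝ), 2 * r < ε :=
  eventually_nhdsWithin_of_eventually_nhds <|
    (eventually_lt_nhds (half_pos hε)).mono fun _ hr => by linarith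

/-- The homothety about the midpoint of `[u, v]` that maps `[u, v]` onto `[u + r, v - r]`. -/
noncomputable def shrink (u v r x : ℝ) : ℝ :=
  (u + v) / 2 + (1 - 2 * r / (v - u)) * (x - (u + v) / 2)

section shrink

variable {u v r x : ℝ}

@[simp]
lemma shrink_zero : shrink u v 0 x = x := by simp [shrink]

lemma shrink_left (huv : u ≠ v) : shrink u v r u = u + r := by
  have : v - u ≠ 0 := sub_ne_zero.2 huv.symm
  unfold shrink; field_simp; ring

lemma shrink_right (huv : u ≠ v) : shrink u v r v = v - r := by
  have : v - u ≠ 0 := sub_ne_zero.2 huv.symm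
  unfold shrink; field_simp; ring

lemma shrink_mem_Icc (hr₀ : 0 ≤ r) (hr : 2 * r ≤ v - u) (hx : x ∈ Icc u v) :
    shrink u v r x ∈ Icc u v := by
  obtain ⟨hux, hxv⟩ := hx
  have ht₀ : 0 ≤ 2 * r / (v - u) := div_nonneg (by linarith) (by linarith)
  have ht₁ : 2 * r / (v - u) ≤ 1 := div_le_one_of_le₀ hr (by linarith)
  unfold shrink
  constructor <;> nlinarith [mul_nonneg ht₀ (sub_nonneg.2 hux), mul_nonneg ht₀ (sub_nonneg.2 hxv)]

variable (huv : u < v) (hr : 2 * r < v - u)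
include huv hr

lemma shrink_slope_pos : 0 < 1 - 2 * r / (v - u) := by
  rwa [sub_pos, div_lt_one (sub_pos.2 huv)]

lemma strictMono_shrink : StrictMono (shrink u v r) := fun x y hxy => by
  have := shrink_slope_pos huv hr
  unfold shrink; gcongr

lemma surjective_shrink : Function.Surjective (shrink u v r) := fun y => by
  have := (shrink_slope_pos huv hr).ne'
  refine ⟨(u + v) / 2 + (y - (u + v) / 2) / (1 - 2 * r / (v - u)), ?_⟩
  unfold shrink; field_simp; ring

noncomputable def shrinkOrderIso : ℝ ≃o ℝ :=
  (strictMono_shrink huv hr).orderIsoOfSurjective _ (surjective_shrink huv hr)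

@[simp]
lemma coe_shrinkOrderIso : ⇑(shrinkOrderIso huv hr) = shrink u v r := rfl

end shrink

lemma tendsto_shrink_corner {f : ℝ × ℝ → ℝ} {u v u' v' x y : ℝ}
    (hf : ContinuousOn f (Icc u v ×ˢ Icc u' v')) (huv : u < v) (huv' : u' < v')
    (hx : x ∈ Icc u v) (hy : y ∈ Icc u' v') :
    Tendsto (fun r => f (shrink u v r x, shrink u' v' r y)) (𝓝[>] 0) (𝓝 (f (x, y))) := by
  refine (hf (x, y) ⟨hx, hy⟩).tendsto.comp (tendsto_nhdsWithin_iff.2 ⟨?_, ?_⟩)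
  · have hcont : Continuous fun r => (shrink u v r x, shrink u' v' r y) := by
      unfold shrink; fun_prop
    simpa using (hcont.tendsto 0).mono_left nhdsWithin_le_nhds
  · filter_upwards [self_mem_nhdsWithin, eventually_two_mul_lt (sub_pos.2 huv),
      eventually_two_mul_lt (sub_pos.2 huv')] with r (hr : 0 < r) h h'
    exact ⟨shrink_mem_Icc hr.le h.le hx, shrink_mem_Icc hr.le h'.le hy⟩

section shrinkRect

variable {p : ℝ} {f : ℝ × ℝ → ℝ} {A : Rect}

lemma tendsto_inc_shrink (hf : ContinuousOn f A.toSet) (hab : A.a < A.b) (hcd : A.c < A.d)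
    {Q : Rect} (hQ : Q.Valid) (hQA : Q.toSet ⊆ A.toSet) :
    Tendsto (fun r => Rect.inc f (Q.map (shrink A.a A.b r) (shrink A.c A.d r)))
      (𝓝[>] 0) (𝓝 (Rect.inc f Q)) := by
  have corner : ∀ {x y}, x ∈ Icc Q.a Q.b → y ∈ Icc Q.c Q.d →
      Tendsto (fun r => f (shrink A.a A.b r x, shrink A.c A.d r y)) (𝓝[>] 0) (𝓝 (f (x, y))) :=
    fun {x y} hx hy =>
      have hxy : (x, y) ∈ A.toSet := hQA ⟨hx, hy⟩
      tendsto_shrink_corner hf hab hcd hxy.1 hxy.2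
  have ha := left_mem_Icc.2 hQ.1
  have hb := right_mem_Icc.2 hQ.1
  have hc := left_mem_Icc.2 hQ.2
  have hd := right_mem_Icc.2 hQ.2
  exact (((corner hb hd).sub (corner ha hd)).sub (corner hb hc)).add (corner ha hc)

lemma tendsto_sum_shrink (hf : ContinuousOn f A.toSet) (hab : A.a < A.b) (hcd : A.c < A.d)
    {P : Finset Rect} (hP : IsPartition A P) :
    Tendsto (fun r => ∑ Q ∈ P,
        ENNReal.ofReal |Rect.inc f (Q.map (shrink A.a A.b r) (shrink A.c A.d r))| ^ p)
      (𝓝[>] 0) (𝓝 (∑ Q ∈ P, ENNReal.ofReal |Rect.inc f Q| ^ p)) :=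
  tendsto_finsetSum _ fun Q hQ => (ENNReal.continuous_rpow_const.tendsto _).comp <|
    (ENNReal.continuous_ofReal.tendsto _).comp
      (tendsto_inc_shrink hf hab hcd (hP.1 Q hQ) (hP.subset hQ)).abs

lemma eventually_lt_cVarSum_shrink {a₁ a₂ a₃ a₄ : ℝ}
    (hf : ContinuousOn f (Rect.mk a₁ a₂ a₃ a₄).toSet) (h12 : a₁ < a₂) (h34 : a₃ < a₄) {b : ℝ≥0∞}
    (hb : b < cVarSum p f ⟨a₁, a₂, a₃, a₄⟩) :
    ∀ᶠ r in 𝓝[>] 0, b < cVarSum p f ⟨a₁ + r, a₂ - r, a₃ + r, a₄ - r⟩ := by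
  obtain ⟨P, hb⟩ := lt_iSup_iff.1 hb
  obtain ⟨hP, hb⟩ := lt_iSup_iff.1 hb
  filter_upwards [(tendsto_sum_shrink hf h12 h34 hP).eventually_const_lt hb,
    eventually_two_mul_lt (sub_pos.2 h12), eventually_two_mul_lt (sub_pos.2 h34)] with r hbr hr hr'
  have hle := sum_le_cVarSum_map (f := f) (p := p)
    (shrinkOrderIso h12 hr) (shrinkOrderIso h34 hr') hP
  simp only [coe_shrinkOrderIso, Rect.map, shrink_left h12.ne, shrink_right h12.ne,
    shrink_left h34.ne, shrink_right h34.ne] at hle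
  exact hbr.trans_le hle

end shrinkRect

theorem controlled_var_inner_continuity_general (p T : ℝ)
    (f : ℝ × ℝ → ℝ) (hcont : ContinuousOn f (Rect.mk 0 T 0 T).toSet)
    (a₁ a₂ a₃ a₄ : ℝ) (h1 : 0 ≤ a₁) (h12 : a₁ < a₂) (h2 : a₂ ≤ T)
    (h3 : 0 ≤ a₃) (h34 : a₃ < a₄) (h4 : a₄ ≤ T) :
    Tendsto (fun r : ℝ => cVarSum p f (Rect.mk (a₁ + r) (a₂ - r) (a₃ + r) (a₄ - r)))
      (𝓝[>] 0) (𝓝 (cVarSum p f (Rect.mk a₁ a₂ a₃ a₄))) := by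
  have hA : ContinuousOn f (Rect.mk a₁ a₂ a₃ a₄).toSet :=
    hcont.mono (prod_mono (Icc_subset_Icc h1 h2) (Icc_subset_Icc h3 h4))
  refine tendsto_order.2 ⟨fun b hb => eventually_lt_cVarSum_shrink hA h12 h34 hb, fun b hb => ?_⟩
  filter_upwards [self_mem_nhdsWithin, eventually_two_mul_lt (sub_pos.2 h12),
    eventually_two_mul_lt (sub_pos.2 h34)] with r (hr : 0 < r) hr₁₂ hr₃₄
  refine lt_of_le_of_lt (cVarSum_mono ?_ ?_ ?_ ?_ ?_ ?_) hb <;> linarith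

/-- inner continuity: if `f : [0,T]² → ℝ` is continuous with finite
controlled `p`-variation and `ω(R) := |f|^p_{p-var;R}`, then for any nondegenerate
rectangle `A = [a₁,a₂]×[a₃,a₄] ⊆ [0,T]²`,
`ω(A) = lim_{r↓0} ω([a₁+r,a₂-r]×[a₃+r,a₄-r])`. -/
theorem controlled_var_inner_continuity (p T : ℝ) (hp : 1 ≤ p) (hT : 0 < T)
    (f : ℝ × ℝ → ℝ) (hcont : ContinuousOn f (Rect.mk 0 T 0 T).toSet)
    (hf : cVarSum p f (Rect.mk 0 T 0 T) ≠ ⊤)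
    (a₁ a₂ a₃ a₄ : ℝ) (h1 : 0 ≤ a₁) (h12 : a₁ < a₂) (h2 : a₂ ≤ T)
    (h3 : 0 ≤ a₃) (h34 : a₃ < a₄) (h4 : a₄ ≤ T) :
    Tendsto (fun r : ℝ => cVarSum p f (Rect.mk (a₁ + r) (a₂ - r) (a₃ + r) (a₄ - r)))
      (𝓝[>] 0) (𝓝 (cVarSum p f (Rect.mk a₁ a₂ a₃ a₄))) :=
  controlled_var_inner_continuity_general p T f hcont a₁ a₂ a₃ a₄ h1 h12 h2 h3 h34 h4
end
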